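/- arXiv:2501.08602 — 7 statements merged into one kernel-verified Lean document; each statement's English description precedes it below -/
import Mathlib

section
/- Let s ≥ 0 be an integer and define δ_s = 1 if s ≥ ⌊√s⌋² + ⌊√s⌋ and δ_s = 0 otherwise, q_s = 2⌊√s⌋ + 2 + δ_s, and c_s = s − ⌊√s⌋² − δ_s⌊√s⌋. Then for every even integer n with n > 6⌊√(s+1)⌋ − 6, the generalized Frobenius number of the three consecutive triangular numbers satisfies g(t_n, t_{n+1}, t_{n+2}; s) = ((n+1)(n+2)/4)·(q_s·n + 6c_s) − 1. -/
open Finset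

/-- Number of representations of `m` as `∑ i, a i * x i` with nonnegative integers `x i`
(for positive weights `a i`, every solution satisfies `x i ≤ m`). -/
def repCount {k : ℕ} (a : Fin k → ℕ) (m : ℕ) : ℕ :=
  (Finset.univ.filter (fun x : Fin k → Fin (m + 1) => ∑ i, a i * (x i : ℕ) = m)).card

/-- Representation count extended to the integers (no representations of negative numbers). -/
def repCountZ {k : ℕ} (a : Fin k → ℕ) (m : ℤ) : ℕ :=
  if 0 ≤ m then repCount a m.toNat else 0

/-- The generalized Frobenius number `g(a; s)`: the largest integer having at most `s`
representations by the tuple `a`. -/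
noncomputable def genFrob {k : ℕ} (a : Fin k → ℕ) (s : ℕ) : ℤ :=
  sSup {m : ℤ | repCountZ a m ≤ s}

/-- The `n`-th triangular number `t n = n(n+1)/2`. -/
def t (n : ℕ) : ℕ := n * (n + 1) / 2

/-- `N_s^even = 6⌊√(s+1)⌋ - 6`. -/
def NEven (s : ℕ) : ℤ := 6 * (Nat.sqrt (s + 1) : ℤ) - 6

/-- `N_s^odd = 6⌊(√(4s+5) - 1)/2⌋ - 3`. -/
def NOdd (s : ℕ) : ℤ := 6 * (((Nat.sqrt (4 * s + 5) - 1) / 2 : ℕ) : ℤ) - 3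

/-- `δ_s = 1` if `s ≥ ⌊√s⌋² + ⌊√s⌋`, and `0` otherwise. -/
def deltaS (s : ℕ) : ℤ := if Nat.sqrt s ^ 2 + Nat.sqrt s ≤ s then 1 else 0

/-- `q_s = 2⌊√s⌋ + 2 + δ_s`. -/
def qS (s : ℕ) : ℤ := 2 * (Nat.sqrt s : ℤ) + 2 + deltaS s

/-- `c_s = s - ⌊√s⌋² - δ_s⌊√s⌋`. -/
def cS (s : ℕ) : ℤ := (s : ℤ) - (Nat.sqrt s : ℤ) ^ 2 - deltaS s * (Nat.sqrt s : ℤ)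

/-- For `s = k(k+1) + i` with `0 ≤ i ≤ 2k+1`: `x_s^even`. -/
def xEvenN (k i : ℕ) : ℕ := if i ≤ k then i else i - k - 1

/-- For `s = k(k+1) + i` with `0 ≤ i ≤ 2k+1`: `y_s^even`. -/
def yEvenN (k i : ℕ) : ℕ := if i ≤ k then 2 * (k - i) else 4 * k + 3 - 2 * i

/-- For `s = k(k+1) + i` with `0 ≤ i ≤ 2k+1`: `x_s^odd`. -/
def xOddN (k i : ℕ) : ℕ := if i ≤ k then 2 * i else 2 * (i - k) - 1

/-- For `s = k(k+1) + i` with `0 ≤ i ≤ 2k+1`: `y_s^odd`. -/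
def yOddN (k i : ℕ) : ℕ := if i ≤ k then k - i else 2 * k + 1 - i


/-!
Write `n = 2p`, so that the weights are `A = p(2p+1)`, `B = (p+1)(2p+1)` and `C = (p+1)(2p+3)`.
Modulo `p+1` only `A` survives and `A ≡ 1`; modulo `2p+1` only `C` survives and `C ≡ 1`. Hence
in a representation `Ax + By + Cz = N` the residues of `x` and `z` are forced: with least
residues `x₀, z₀` and `N = x₀A + z₀C + BM`, the representations are
`(x₀ + (p+1)i, M - pi - (2p+3)j, z₀ + (2p+1)j)`, one for each lattice point `(i, j)` of weight
`pi + (2p+3)j ≤ M`.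

Write `s = ⌊(m+1)²/4⌋ + c` with `0 ≤ c ≤ ⌊m/2⌋`; then `q_s = m + 3` and `c_s = c`. Since the
weight is `p(i + 2j) + 3j`, the bound on `n` makes the points of weight `< pm + 3c` exactly those
with `i + 2j < m` (there are `⌊(m+1)²/4⌋`) and the first `c` points on the line `i + 2j = m`:
`s` points in all. So `N = B(p(m+3) + 3c) - 1`, for which `M = pm + 3c - 1`, has `s`
representations, while every larger `N` has `M ≥ pm + 3c` and at least `s + 1` of them.
-/

theorem quarterSquare_succ (m : ℕ) : (m + 2) ^ 2 / 4 = (m + 1) ^ 2 / 4 + (m / 2 + 1) := by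
  obtain ⟨k, rfl | rfl⟩ := Nat.even_or_odd' m
  · rw [show (2 * k + 2) ^ 2 = (k + 1) ^ 2 * 4 by ring,
      show (2 * k + 1) ^ 2 = 1 + (k ^ 2 + k) * 4 by ring,
      Nat.mul_div_cancel _ four_pos, Nat.add_mul_div_right _ _ four_pos]
    ring_nf; omega
  · rw [show (2 * k + 1 + 2) ^ 2 = 1 + (k ^ 2 + 3 * k + 2) * 4 by ring,
      show (2 * k + 1 + 1) ^ 2 = (k + 1) ^ 2 * 4 by ring,
      Nat.mul_div_cancel _ four_pos, Nat.add_mul_div_right _ _ four_pos]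
    ring_nf; omega

theorem exists_quarterSquare_add (s : ℕ) : ∃ m c, c ≤ m / 2 ∧ s = (m + 1) ^ 2 / 4 + c := by
  induction s with
  | zero => exact ⟨0, 0, le_rfl, rfl⟩
  | succ s ih =>
    obtain ⟨m, c, hc, rfl⟩ := ih
    rcases hc.lt_or_eq with hc | rfl
    · exact ⟨m, c + 1, hc, rfl⟩
    · exact ⟨m + 1, 0, Nat.zero_le _, by rw [quarterSquare_succ]; rfl⟩

theorem quarterSquare_eq_of_succ_eq {m k d : ℕ} (hd : d ≤ 1) (hm : m + 1 = 2 * k + d) :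
    (m + 1) ^ 2 / 4 = k ^ 2 + d * k := by
  rw [hm, show (2 * k + d) ^ 2 = d ^ 2 + (k ^ 2 + d * k) * 4 by ring,
    Nat.add_mul_div_right _ _ four_pos]
  interval_cases d <;> simp

theorem exists_succ_eq_two_mul_add (m : ℕ) : ∃ k d, d ≤ 1 ∧ m + 1 = 2 * k + d :=
  ⟨_, _, Nat.le_of_lt_succ (Nat.mod_lt _ two_pos), (Nat.div_add_mod (m + 1) 2).symm⟩

section QuarterSquare

variable {m c : ℕ}

theorem sqrt_quarterSquare_add (hc : c ≤ m / 2) :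
    Nat.sqrt ((m + 1) ^ 2 / 4 + c) = (m + 1) / 2 := by
  obtain ⟨k, d, hd, hm⟩ := exists_succ_eq_two_mul_add m
  rw [quarterSquare_eq_of_succ_eq hd hm, show (m + 1) / 2 = k by omega, eq_comm, Nat.eq_sqrt]
  interval_cases d <;> constructor <;> ring_nf <;> omega

theorem deltaS_quarterSquare_add (hc : c ≤ m / 2) :
    deltaS ((m + 1) ^ 2 / 4 + c) = ((m + 1) % 2 : ℕ) := by
  obtain ⟨k, d, hd, hm⟩ := exists_succ_eq_two_mul_add m
  rw [deltaS, sqrt_quarterSquare_add hc, quarterSquare_eq_of_succ_eq hd hm,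
    show (m + 1) / 2 = k by omega]
  interval_cases d <;> split_ifs <;> ring_nf at * <;> omega

theorem qS_quarterSquare_add (hc : c ≤ m / 2) : qS ((m + 1) ^ 2 / 4 + c) = m + 3 := by
  rw [qS, sqrt_quarterSquare_add hc, deltaS_quarterSquare_add hc]
  omega

theorem cS_quarterSquare_add (hc : c ≤ m / 2) : cS ((m + 1) ^ 2 / 4 + c) = c := by
  obtain ⟨k, d, hd, hm⟩ := exists_succ_eq_two_mul_add m
  rw [cS, sqrt_quarterSquare_add hc, deltaS_quarterSquare_add hc,
    quarterSquare_eq_of_succ_eq hd hm, show (m + 1) / 2 = k by omega,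
    show (m + 1) % 2 = d by omega]
  push_cast
  ring

theorem lt_sqrt_quarterSquare_add_succ (hc : c ≤ m / 2) :
    c < Nat.sqrt ((m + 1) ^ 2 / 4 + c + 1) := by
  obtain ⟨k, d, hd, hm⟩ := exists_succ_eq_two_mul_add m
  have hck : c + 1 ≤ k + d := by omega
  rw [Nat.lt_iff_add_one_le, Nat.le_sqrt, quarterSquare_eq_of_succ_eq hd hm]
  interval_cases d <;> nlinarith [Nat.mul_le_mul hck hck]

end QuarterSquare

section LatticePoints

variable {p m c : ℕ}

theorem finite_setOf_add_two_mul_lt (m : ℕ) : {q : ℕ × ℕ | q.1 + 2 * q.2 < m}.Finite :=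
  ((Set.finite_Iio m).prod (Set.finite_Iio m)).subset fun q hq => by
    simp only [Set.mem_ofPred_eq] at hq
    simp only [Set.mem_prod, Set.mem_Iio]
    omega

theorem setOf_add_two_mul_eq_and_lt (hc : c ≤ m / 2 + 1) :
    {q : ℕ × ℕ | q.1 + 2 * q.2 = m ∧ q.2 < c} = (fun j => (m - 2 * j, j)) '' Set.Iio c := by
  ext ⟨i, j⟩
  simp only [Set.mem_ofPred_eq, Set.mem_image, Set.mem_Iio, Prod.mk.injEq]
  constructor
  · rintro ⟨h, hj⟩
    exact ⟨j, hj, by omega, rfl⟩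
  · rintro ⟨j, hj, rfl, rfl⟩
    omega

theorem finite_setOf_add_two_mul_eq_and_lt (m c : ℕ) :
    {q : ℕ × ℕ | q.1 + 2 * q.2 = m ∧ q.2 < c}.Finite :=
  (finite_setOf_add_two_mul_lt (m + 1)).subset fun q hq => by
    simp only [Set.mem_ofPred_eq] at hq ⊢
    omega

theorem ncard_setOf_add_two_mul_eq_and_lt (hc : c ≤ m / 2 + 1) :
    {q : ℕ × ℕ | q.1 + 2 * q.2 = m ∧ q.2 < c}.ncard = c := by
  rw [setOf_add_two_mul_eq_and_lt hc,
    Set.ncard_image_of_injective _ fun a b h => (Prod.ext_iff.1 h).2, Set.ncard_Iio_nat]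

theorem ncard_setOf_add_two_mul_lt (m : ℕ) :
    {q : ℕ × ℕ | q.1 + 2 * q.2 < m}.ncard = (m + 1) ^ 2 / 4 := by
  induction m with
  | zero => simp
  | succ m ih =>
    have hsplit : {q : ℕ × ℕ | q.1 + 2 * q.2 < m + 1} =
        {q | q.1 + 2 * q.2 < m} ∪ {q | q.1 + 2 * q.2 = m ∧ q.2 < m / 2 + 1} := by
      ext q
      simp only [Set.mem_ofPred_eq, Set.mem_union]
      omega
    have hdisj : Disjoint {q : ℕ × ℕ | q.1 + 2 * q.2 < m}
        {q | q.1 + 2 * q.2 = m ∧ q.2 < m / 2 + 1} :=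
      Set.disjoint_left.2 fun q h h' => by simp only [Set.mem_ofPred_eq] at h h'; omega
    rw [hsplit, Set.ncard_union_eq hdisj (finite_setOf_add_two_mul_lt m)
      (finite_setOf_add_two_mul_eq_and_lt m _), ih, ncard_setOf_add_two_mul_eq_and_lt le_rfl,
      quarterSquare_succ]

theorem finite_setOf_weight_le (hp : 0 < p) (L : ℕ) :
    {q : ℕ × ℕ | p * q.1 + (2 * p + 3) * q.2 ≤ L}.Finite :=
  ((Set.finite_Iic L).prod (Set.finite_Iic L)).subset fun q hq => by
    simp only [Set.mem_ofPred_eq] at hq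
    simp only [Set.mem_prod, Set.mem_Iic]
    constructor <;> nlinarith

theorem setOf_weight_lt_eq (hm : 3 * ((m + 1) / 2) ≤ p + 2) (hc : 3 * c ≤ p) :
    {q : ℕ × ℕ | p * q.1 + (2 * p + 3) * q.2 < p * m + 3 * c} =
      {q | q.1 + 2 * q.2 < m} ∪ {q | q.1 + 2 * q.2 = m ∧ q.2 < c} := by
  ext ⟨i, j⟩
  simp only [Set.mem_ofPred_eq, Set.mem_union]
  rw [show p * i + (2 * p + 3) * j = p * (i + 2 * j) + 3 * j by ring]
  rcases lt_trichotomy (i + 2 * j) m with h | rfl | h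
  · have := Nat.mul_le_mul_left p (Nat.succ_le_of_lt h)
    rw [Nat.mul_succ] at this
    omega
  · omega
  · have := Nat.mul_le_mul_left p (Nat.succ_le_of_lt h)
    rw [Nat.mul_succ] at this
    omega

theorem ncard_setOf_weight_lt (hm : 3 * ((m + 1) / 2) ≤ p + 2) (hc : 3 * c ≤ p)
    (hcm : c ≤ m / 2 + 1) :
    {q : ℕ × ℕ | p * q.1 + (2 * p + 3) * q.2 < p * m + 3 * c}.ncard = (m + 1) ^ 2 / 4 + c := by
  have hdisj : Disjoint {q : ℕ × ℕ | q.1 + 2 * q.2 < m} {q | q.1 + 2 * q.2 = m ∧ q.2 < c} :=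
    Set.disjoint_left.2 fun q h h' => by simp only [Set.mem_ofPred_eq] at h h'; omega
  rw [setOf_weight_lt_eq hm hc, Set.ncard_union_eq hdisj (finite_setOf_add_two_mul_lt m)
      (finite_setOf_add_two_mul_eq_and_lt m c),
    ncard_setOf_add_two_mul_lt, ncard_setOf_add_two_mul_eq_and_lt hcm]

theorem lt_ncard_setOf_weight_le (hp : 0 < p) (hm : 3 * ((m + 1) / 2) ≤ p + 2) (hc : 3 * c ≤ p)
    (hcm : c ≤ m / 2) {L : ℕ} (hL : p * m + 3 * c ≤ L) :
    (m + 1) ^ 2 / 4 + c < {q : ℕ × ℕ | p * q.1 + (2 * p + 3) * q.2 ≤ L}.ncard := by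
  rw [← ncard_setOf_weight_lt hm hc (by omega)]
  refine Set.ncard_lt_ncard ?_ (finite_setOf_weight_le hp L)
  -- the extra point `(m - 2c, c)` has weight exactly `p m + 3 c`
  obtain ⟨r, rfl⟩ : ∃ r, m = 2 * c + r := ⟨m - 2 * c, by omega⟩
  have hw : p * r + (2 * p + 3) * c = p * (2 * c + r) + 3 * c := by ring
  refine (Set.ssubset_iff_of_subset fun q hq => ?_).2 ⟨(r, c), ?_, ?_⟩
  · simp only [Set.mem_ofPred_eq] at hq ⊢; omega
  · simp only [Set.mem_ofPred_eq]; omega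
  · simp only [Set.mem_ofPred_eq]; omega

end LatticePoints

theorem repCount_eq_ncard {k : ℕ} (a : Fin k → ℕ) (ha : ∀ i, 0 < a i) (m : ℕ) :
    repCount a m = {x : Fin k → ℕ | ∑ i, a i * x i = m}.ncard := by
  have hinj : Function.Injective fun (x : Fin k → Fin (m + 1)) (i : Fin k) => (x i : ℕ) :=
    fun x y h => funext fun i => Fin.ext (congrFun h i)
  rw [repCount, ← Set.ncard_coe_finset, ← Set.ncard_image_of_injective _ hinj]
  congr 1
  ext x
  simp only [Set.mem_image, Finset.coe_filter, Finset.mem_univ, true_and, Set.mem_ofPred_eq]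
  constructor
  · rintro ⟨y, hy, rfl⟩
    exact hy
  · intro hx
    have hle (i : Fin k) : x i < m + 1 := Nat.lt_succ_of_le <| calc
      x i ≤ a i * x i := Nat.le_mul_of_pos_left _ (ha i)
      _ ≤ ∑ j, a j * x j := Finset.single_le_sum (f := fun j => a j * x j)
        (fun j _ => Nat.zero_le _) (Finset.mem_univ i)
      _ = m := hx
    exact ⟨fun i => ⟨x i, hle i⟩, hx, rfl⟩

theorem exists_eq_add_mul_of_dvd_sub {n r x : ℕ} (hr : r < n) (h : (n : ℤ) ∣ r - x) :
    ∃ i, x = r + n * i := by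
  have hmod : x % n = r := by
    rw [← Nat.mod_eq_of_lt hr]
    exact Nat.modEq_iff_dvd.2 h
  exact ⟨x / n, by rw [← hmod, Nat.mod_add_div]⟩

theorem triangular_triple (p : ℕ) :
    ![t (2 * p), t (2 * p + 1), t (2 * p + 2)] =
      ![p * (2 * p + 1), (p + 1) * (2 * p + 1), (p + 1) * (2 * p + 3)] := by
  have h (n a : ℕ) (ha : n * (n + 1) = a * 2) : t n = a := by
    rw [t, ha, Nat.mul_div_cancel _ two_pos]
  rw [h _ (p * (2 * p + 1)) (by ring), h _ ((p + 1) * (2 * p + 1)) (by ring),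
    h _ ((p + 1) * (2 * p + 3)) (by ring)]

theorem exists_eq_triangular_combination (p N : ℕ) : ∃ x₀ ≤ p, ∃ z₀ ≤ 2 * p, ∃ M : ℤ,
    (N : ℤ) = x₀ * (p * (2 * p + 1)) + z₀ * ((p + 1) * (2 * p + 3)) +
      (p + 1) * (2 * p + 1) * M := by
  obtain ⟨x₀, hx₀, q₁, hq₁⟩ : ∃ x₀ < p + 1, ∃ q₁, N = (p + 1) * q₁ + x₀ :=
    ⟨_, Nat.mod_lt _ (by omega), _, (Nat.div_add_mod N (p + 1)).symm⟩
  obtain ⟨z₀, hz₀, q₂, hq₂⟩ : ∃ z₀ < 2 * p + 1, ∃ q₂, N = (2 * p + 1) * q₂ + z₀ :=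
    ⟨_, Nat.mod_lt _ (by omega), _, (Nat.div_add_mod N (2 * p + 1)).symm⟩
  have hcop : IsCoprime ((p : ℤ) + 1) (2 * p + 1) := ⟨2, -1, by ring⟩
  have h₁ : ((p : ℤ) + 1) ∣ N - x₀ * (p * (2 * p + 1)) - z₀ * ((p + 1) * (2 * p + 3)) :=
    ⟨q₁ - x₀ * (2 * p - 1) - z₀ * (2 * p + 3), by rw [hq₁]; push_cast; ring⟩
  have h₂ : (2 * (p : ℤ) + 1) ∣ N - x₀ * (p * (2 * p + 1)) - z₀ * ((p + 1) * (2 * p + 3)) :=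
    ⟨q₂ - x₀ * p - z₀ * (p + 2), by rw [hq₂]; push_cast; ring⟩
  obtain ⟨M, hM⟩ := hcop.mul_dvd h₁ h₂
  exact ⟨x₀, by omega, z₀, by omega, M, by linear_combination hM⟩

theorem repCount_eq_ncard_setOf_weight_le {p x₀ z₀ N : ℕ} {M : ℤ} (hp : 0 < p) (hx₀ : x₀ ≤ p)
    (hz₀ : z₀ ≤ 2 * p) (hN : (N : ℤ) = x₀ * (p * (2 * p + 1)) + z₀ * ((p + 1) * (2 * p + 3)) +
      (p + 1) * (2 * p + 1) * M) :
    repCount ![p * (2 * p + 1), (p + 1) * (2 * p + 1), (p + 1) * (2 * p + 3)] N =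
      {q : ℕ × ℕ | ((p * q.1 + (2 * p + 3) * q.2 : ℕ) : ℤ) ≤ M}.ncard := by
  rw [repCount_eq_ncard _ (fun i => by fin_cases i <;> simp [hp])]
  set f : ℕ × ℕ → Fin 3 → ℕ := fun q =>
    ![x₀ + (p + 1) * q.1, (M - (p * q.1 + (2 * p + 3) * q.2 : ℕ)).toNat, z₀ + (2 * p + 1) * q.2]
  have hf : f.Injective := fun q q' h => by
    have h₀ := congrFun h 0
    have h₂ := congrFun h 2
    simp only [f, Matrix.cons_val_zero, Matrix.cons_val_two, Matrix.tail_cons, Matrix.head_cons,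
      add_right_inj] at h₀ h₂
    exact Prod.ext (Nat.eq_of_mul_eq_mul_left (by omega) h₀)
      (Nat.eq_of_mul_eq_mul_left (by omega) h₂)
  rw [← Set.ncard_image_of_injective _ hf]
  congr 1
  ext x
  simp only [Fin.sum_univ_three, Matrix.cons_val_zero, Matrix.cons_val_one, Matrix.cons_val_two,
    Matrix.tail_cons, Matrix.head_cons, Set.mem_ofPred_eq, Set.mem_image]
  constructor
  · intro hx
    have hxZ := congrArg (Nat.cast : ℕ → ℤ) hx
    push_cast at hxZ
    obtain ⟨i, hi⟩ := exists_eq_add_mul_of_dvd_sub (x := x 0) (Nat.lt_succ_of_le hx₀)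
      ⟨(2 * p + 1) * (x 1 - M) + (2 * p + 3) * (x 2 - z₀) + (2 * p - 1) * (x 0 - x₀),
        by push_cast; linear_combination -hN - hxZ⟩
    obtain ⟨j, hj⟩ := exists_eq_add_mul_of_dvd_sub (x := x 2) (Nat.lt_succ_of_le hz₀)
      ⟨p * (x 0 - x₀) + (p + 1) * (x 1 - M) + (p + 2) * (x 2 - z₀),
        by push_cast; linear_combination -hN - hxZ⟩
    have hy : (x 1 : ℤ) = M - (p * i + (2 * p + 3) * j) := by
      have hB : ((p : ℤ) + 1) * (2 * p + 1) ≠ 0 := by positivity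
      refine mul_left_cancel₀ hB ?_
      rw [hi, hj] at hxZ
      push_cast at hxZ
      linear_combination hxZ + hN
    refine ⟨(i, j), by push_cast; omega, funext fun k => ?_⟩
    fin_cases k
    · simp [f, hi]
    · simp [f, ← hy]
    · simp [f, hj]
  · rintro ⟨q, hq, rfl⟩
    push_cast at hq
    simp only [f, Matrix.cons_val_zero, Matrix.cons_val_one, Matrix.cons_val_two,
      Matrix.tail_cons, Matrix.head_cons]
    zify [hq]
    rw [Int.toNat_of_nonneg (by omega)]
    linear_combination -hN

theorem genFrob_triangular {p m c : ℕ} (hp : 0 < p) (hm : 3 * ((m + 1) / 2) ≤ p + 2)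
    (hc : 3 * c ≤ p) (hcm : c ≤ m / 2) :
    genFrob ![t (2 * p), t (2 * p + 1), t (2 * p + 2)] ((m + 1) ^ 2 / 4 + c) =
      (p + 1) * (2 * p + 1) * (p * (m + 3) + 3 * c) - 1 := by
  rw [triangular_triple]
  have hG : ((p + 1) * (2 * p + 1) * (p * (m + 3) + 3 * c) - 1 : ℤ) =
      p * (p * (2 * p + 1)) + (2 * p : ℕ) * ((p + 1) * (2 * p + 3)) +
        (p + 1) * (2 * p + 1) * ((p * m + 3 * c : ℕ) - 1) := by push_cast; ring
  have hG₀ : (0 : ℤ) ≤ (p + 1) * (2 * p + 1) * (p * (m + 3) + 3 * c) - 1 := by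
    have : (1 : ℤ) ≤ (p + 1) * (2 * p + 1) * (p * (m + 3) + 3 * c) :=
      one_le_mul_of_one_le_of_one_le (by nlinarith) (by nlinarith)
    omega
  refine IsGreatest.csSup_eq ⟨?_, fun N hN => ?_⟩
  · obtain ⟨G, hGdef⟩ := Int.eq_ofNat_of_zero_le hG₀
    rw [hGdef] at hG ⊢
    rw [Set.mem_ofPred_eq, repCountZ, if_pos (Int.natCast_nonneg G), Int.toNat_natCast,
      repCount_eq_ncard_setOf_weight_le hp le_rfl le_rfl hG]
    have hlt : {q : ℕ × ℕ | ((p * q.1 + (2 * p + 3) * q.2 : ℕ) : ℤ) ≤ (p * m + 3 * c : ℕ) - 1} =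
        {q | p * q.1 + (2 * p + 3) * q.2 < p * m + 3 * c} := by
      ext q
      simp only [Set.mem_ofPred_eq]
      omega
    rw [hlt, ncard_setOf_weight_lt hm hc (by omega)]
  · by_contra! hGN
    have hN₀ : 0 ≤ N := hG₀.trans hGN.le
    obtain ⟨N, rfl⟩ := Int.eq_ofNat_of_zero_le hN₀
    obtain ⟨x₀, hx₀, z₀, hz₀, M, hM⟩ := exists_eq_triangular_combination p N
    have hVM : ((p * m + 3 * c : ℕ) : ℤ) ≤ M := by
      by_contra! hMV
      have : (N : ℤ) ≤ (p + 1) * (2 * p + 1) * (p * (m + 3) + 3 * c) - 1 := by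
        rw [hM, hG]
        gcongr
        omega
      omega
    obtain ⟨L, rfl⟩ := Int.eq_ofNat_of_zero_le ((Nat.cast_nonneg _).trans hVM)
    rw [Set.mem_ofPred_eq, repCountZ, if_pos hN₀, Int.toNat_natCast,
      repCount_eq_ncard_setOf_weight_le hp hx₀ hz₀ hM] at hN
    simp only [Nat.cast_le] at hN hVM
    exact hN.not_gt (lt_ncard_setOf_weight_le hp hm hc hcm hVM)

/-- for even `n > N_s^even`,
`g(t_n, t_{n+1}, t_{n+2}; s) = ((n+1)(n+2)/4)(q_s n + 6 c_s) - 1`. -/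
theorem stmt_0 (s n : ℕ) (hn : Even n) (hbound : (n : ℤ) > NEven s) :
    genFrob ![t n, t (n + 1), t (n + 2)] s =
      ((n : ℤ) + 1) * ((n : ℤ) + 2) * (qS s * (n : ℤ) + 6 * cS s) / 4 - 1 := by
  obtain ⟨p, rfl⟩ : ∃ p, n = 2 * p := hn.two_dvd
  obtain ⟨m, c, hcm, rfl⟩ := exists_quarterSquare_add s
  have hp : 3 * Nat.sqrt ((m + 1) ^ 2 / 4 + c + 1) ≤ p + 2 := by
    rw [NEven] at hbound
    push_cast at hbound
    omega
  have hsqrt : (m + 1) / 2 ≤ Nat.sqrt ((m + 1) ^ 2 / 4 + c + 1) :=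
    sqrt_quarterSquare_add hcm ▸ Nat.sqrt_le_sqrt (Nat.le_succ _)
  have hc := lt_sqrt_quarterSquare_add_succ hcm
  rw [genFrob_triangular (by omega) (by omega) (by omega) hcm, qS_quarterSquare_add hcm,
    cS_quarterSquare_add hcm]
  push_cast
  rw [show ((2 * p : ℤ) + 1) * (2 * p + 2) * ((m + 3) * (2 * p) + 6 * c) =
      4 * ((p + 1) * (2 * p + 1) * (p * (m + 3) + 3 * c)) by ring,
    Int.mul_ediv_cancel_left _ four_ne_zero]
end

section
/- Let s ≥ 0 be an integer and define δ_s = 1 if s ≥ ⌊√s⌋² + ⌊√s⌋ and δ_s = 0 otherwise, q_s = 2⌊√s⌋ + 2 + δ_s, and c_s = s − ⌊√s⌋² − δ_s⌊√s⌋. Then for every odd integer n with n > 6⌊(√(4s+5) − 1)/2⌋ − 3, the generalized Frobenius number of the three consecutive triangular numbers satisfies g(t_n, t_{n+1}, t_{n+2}; s) = ((n+1)(n+2)/4)·(q_s·n + 6c_s − 3δ_s) − 1. -/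
/-!
For odd `n = 2m+1` the weights factor as `t_n = αp`, `t_{n+1} = αβ`, `t_{n+2} = βq` with
`α = m+1`, `β = 2m+3`, `p = 2m+1`, `q = m+2`. Reducing `αp x + αβ y + βq z = N` modulo `β` and
modulo `α` fixes `x` mod `β` and `z` mod `α`, so the representations of `N` are in bijection
with the lattice points of a triangle `p i + q j ≤ M`, and the largest `N` belonging to a given
`M` is `αp(β-1) + βq(α-1) + αβM`. Hence `g(αp, αβ, βq; s)` is this number for the `M` whose
triangle has at most `s` points while the next one has more. For
`M = (2m+1)K + e(m+2) + 3c - 1` (`e ≤ 1`, `c ≤ K`) and `m` large compared with `√s`, the rows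
of the triangle have `2t + e + [t < c]` points, `K(K+1) + e(K+1) + c` in total, and every `s`
has exactly one such form.
-/

open Finset

theorem repCount_three (a b c N : ℕ) :
    repCount ![a, b, c] N =
      ((range (N + 1) ×ˢ range (N + 1) ×ˢ range (N + 1)).filter
        fun x : ℕ × ℕ × ℕ => a * x.1 + b * x.2.1 + c * x.2.2 = N).card := by
  unfold repCount
  apply Finset.card_nbij' (fun v : Fin 3 → Fin (N + 1) => ((v 0 : ℕ), (v 1 : ℕ), (v 2 : ℕ)))
    (fun x : ℕ × ℕ × ℕ =>
      (![Fin.ofNat (N + 1) x.1, Fin.ofNat (N + 1) x.2.1, Fin.ofNat (N + 1) x.2.2] :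
        Fin 3 → Fin (N + 1)))
  · intro v hv
    simp_all [Fin.sum_univ_three, Fin.is_le]
  · rintro ⟨x, y, z⟩ h
    simp only [coe_filter, mem_product, mem_range, Set.mem_ofPred_eq] at h
    simp [Fin.sum_univ_three, Nat.mod_eq_of_lt, h]
  · intro v _
    ext i
    fin_cases i <;> simp
  · rintro ⟨x, y, z⟩ h
    simp only [coe_filter, mem_product, mem_range, Set.mem_ofPred_eq] at h
    simp [Nat.mod_eq_of_lt, h]

-- The range bound `M.toNat` loses no lattice point only when `0 < p` and `0 < q`.
def triangleLattice (p q : ℕ) (M : ℤ) : Finset (ℕ × ℕ) :=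
  (range (M.toNat + 1) ×ˢ range (M.toNat + 1)).filter fun ij => (p * ij.1 + q * ij.2 : ℤ) ≤ M

section TriangleLattice

variable {p q : ℕ}

theorem mem_triangleLattice (hp : 0 < p) (hq : 0 < q) {M : ℤ} {ij : ℕ × ℕ} :
    ij ∈ triangleLattice p q M ↔ (p * ij.1 + q * ij.2 : ℤ) ≤ M := by
  refine ⟨fun h => (mem_filter.mp h).2, fun h => mem_filter.mpr ⟨?_, h⟩⟩
  have hi : (ij.1 : ℤ) ≤ p * ij.1 :=
    le_mul_of_one_le_left (by positivity) (by exact_mod_cast hp)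
  have hj : (ij.2 : ℤ) ≤ q * ij.2 :=
    le_mul_of_one_le_left (by positivity) (by exact_mod_cast hq)
  simp only [mem_product, mem_range]
  constructor <;> nlinarith [Int.self_le_toNat M]

theorem triangleLattice_mono (hp : 0 < p) (hq : 0 < q) {M M' : ℤ} (h : M ≤ M') :
    triangleLattice p q M ⊆ triangleLattice p q M' := fun _ hij =>
  (mem_triangleLattice hp hq).mpr (((mem_triangleLattice hp hq).mp hij).trans h)

end TriangleLattice

theorem exists_lt_dvd_sub_mul {a b : ℕ} (hab : Nat.Coprime a b) (hb : 0 < b) (N : ℤ) :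
    ∃ x < b, (b : ℤ) ∣ N - a * x := by
  obtain ⟨u, v, huv⟩ := Nat.isCoprime_iff_coprime.mpr hab
  have hb' : (0 : ℤ) < b := by exact_mod_cast hb
  have := Int.emod_lt_of_pos (u * N) hb'
  refine ⟨((u * N) % b).toNat, by omega, N * v + a * (u * N / b), ?_⟩
  rw [Int.toNat_of_nonneg (Int.emod_nonneg _ hb'.ne'), Int.emod_def]
  linear_combination (-N) * huv

theorem exists_eq_add_of_dvd_sub {b x x₀ : ℕ} (hx₀ : x₀ < b) (h : (b : ℤ) ∣ x - x₀) :
    ∃ i : ℕ, x = x₀ + b * i := by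
  obtain ⟨a, ha⟩ := h
  have ha₀ : 0 ≤ a := by
    by_contra! ha₀
    nlinarith
  lift a to ℕ using ha₀
  exact ⟨a, by linarith⟩

section Reduction

variable {α β p q : ℕ}

theorem exists_eq_mul_add_mul_add_mul (hα : 0 < α) (hβ : 0 < β)
    (hpβ : Nat.Coprime (α * p) β) (hqα : Nat.Coprime (β * q) α) (N : ℤ) :
    ∃ x₀ < β, ∃ z₀ < α, ∃ M : ℤ, N = α * p * x₀ + β * q * z₀ + α * β * M := by
  obtain ⟨x₀, hx₀, u, hu⟩ := exists_lt_dvd_sub_mul hpβ hβ N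
  obtain ⟨z₀, hz₀, w, hw⟩ := exists_lt_dvd_sub_mul hqα hα N
  have hαβ : IsCoprime (α : ℤ) β := Nat.isCoprime_iff_coprime.mpr hpβ.coprime_mul_right
  obtain ⟨M, hM⟩ := hαβ.mul_dvd
    (⟨w - p * x₀, by push_cast at hw ⊢; linear_combination hw⟩ :
      (α : ℤ) ∣ N - α * p * x₀ - β * q * z₀)
    (⟨u - q * z₀, by push_cast at hu ⊢; linear_combination hu⟩ :
      (β : ℤ) ∣ N - α * p * x₀ - β * q * z₀)
  exact ⟨x₀, hx₀, z₀, hz₀, M, by linear_combination hM⟩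

theorem repCount_eq_card_triangleLattice (hα : 0 < α) (hβ : 0 < β) (hp : 0 < p) (hq : 0 < q)
    (hpβ : Nat.Coprime (α * p) β) (hqα : Nat.Coprime (β * q) α)
    {x₀ z₀ N : ℕ} {M : ℤ} (hx₀ : x₀ < β) (hz₀ : z₀ < α)
    (hN : (N : ℤ) = α * p * x₀ + β * q * z₀ + α * β * M) :
    repCount ![α * p, α * β, β * q] N = (triangleLattice p q M).card := by
  rw [repCount_three]
  symm
  apply Finset.card_nbij
    (fun ij => (x₀ + β * ij.1, (M - p * ij.1 - q * ij.2).toNat, z₀ + α * ij.2))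
  · rintro ⟨i, j⟩ hij
    rw [mem_coe, mem_triangleLattice hp hq] at hij
    have hsum : α * p * (x₀ + β * i) + α * β * (M - p * i - q * j).toNat
        + β * q * (z₀ + α * j) = N := by
      have := Int.toNat_of_nonneg (by linarith : 0 ≤ M - p * i - q * j)
      zify
      rw [this, hN]
      ring
    have h₁ := Nat.le_mul_of_pos_left (x₀ + β * i) (Nat.mul_pos hα hp)
    have h₂ := Nat.le_mul_of_pos_left (M - p * i - q * j).toNat (Nat.mul_pos hα hβ)
    have h₃ := Nat.le_mul_of_pos_left (z₀ + α * j) (Nat.mul_pos hβ hq)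
    simp only [coe_filter, mem_product, mem_range, Set.mem_ofPred_eq]
    exact ⟨⟨by omega, by omega, by omega⟩, hsum⟩
  · rintro ⟨i, j⟩ - ⟨i', j'⟩ - h
    simp only [Prod.mk.injEq] at h
    simp only [Prod.mk.injEq]
    exact ⟨Nat.eq_of_mul_eq_mul_left hβ (by omega), Nat.eq_of_mul_eq_mul_left hα (by omega)⟩
  · rintro ⟨x, y, z⟩ hxyz
    simp only [coe_filter, mem_product, mem_range, Set.mem_ofPred_eq] at hxyz
    have hxyz' : (α * p * x + α * β * y + β * q * z : ℤ)
        = α * p * x₀ + β * q * z₀ + α * β * M := by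
      rw [← hN]
      exact_mod_cast hxyz.2
    obtain ⟨i, rfl⟩ := exists_eq_add_of_dvd_sub (x := x) hx₀
      ((Nat.isCoprime_iff_coprime.mpr hpβ).symm.dvd_of_dvd_mul_left
        (⟨q * (z₀ - z) + α * (M - y), by push_cast; linear_combination hxyz'⟩ :
          (β : ℤ) ∣ ((α * p : ℕ) : ℤ) * (x - x₀)))
    obtain ⟨j, rfl⟩ := exists_eq_add_of_dvd_sub (x := z) hz₀
      ((Nat.isCoprime_iff_coprime.mpr hqα).symm.dvd_of_dvd_mul_left
        (⟨β * (M - y - p * i), by push_cast at hxyz' ⊢; linear_combination hxyz'⟩ :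
          (α : ℤ) ∣ ((β * q : ℕ) : ℤ) * (z - z₀)))
    have hy : (y : ℤ) = M - p * i - q * j := by
      have hαβ : (α * β : ℤ) ≠ 0 := by positivity
      apply mul_left_cancel₀ hαβ
      push_cast at hxyz'
      linear_combination hxyz'
    refine ⟨(i, j), ?_, by simp [← hy]⟩
    rw [mem_coe, mem_triangleLattice hp hq]
    linarith [Int.natCast_nonneg y]

theorem repCountZ_le_card_triangleLattice (hα : 0 < α) (hβ : 0 < β) (hp : 0 < p) (hq : 0 < q)
    (hpβ : Nat.Coprime (α * p) β) (hqα : Nat.Coprime (β * q) α) (M : ℤ) :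
    repCountZ ![α * p, α * β, β * q]
        (α * p * (β - 1 : ℤ) + β * q * (α - 1 : ℤ) + α * β * M)
      ≤ (triangleLattice p q M).card := by
  unfold repCountZ
  split_ifs with h₀
  · refine (repCount_eq_card_triangleLattice hα hβ hp hq hpβ hqα
      (x₀ := β - 1) (z₀ := α - 1) (by omega) (by omega) ?_).le
    rw [Int.toNat_of_nonneg h₀]
    push_cast [Nat.cast_sub hα, Nat.cast_sub hβ]
    ring
  · exact Nat.zero_le _

theorem card_triangleLattice_le_repCountZ (hα : 0 < α) (hβ : 0 < β) (hp : 0 < p) (hq : 0 < q)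
    (hpβ : Nat.Coprime (α * p) β) (hqα : Nat.Coprime (β * q) α) {M N : ℤ} (hM : 0 ≤ M + 1)
    (hN : α * p * (β - 1 : ℤ) + β * q * (α - 1 : ℤ) + α * β * M < N) :
    (triangleLattice p q (M + 1)).card ≤ repCountZ ![α * p, α * β, β * q] N := by
  have h₀ : 0 ≤ N := by
    -- one more than the left side of `hN` is
    -- `α(β-1)(p-1) + β(α-1)(q-1) + (α-1)(β-1) + αβ(M+1)`
    have ha : (0 : ℤ) ≤ α - 1 := by omega
    have hb : (0 : ℤ) ≤ β - 1 := by omega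
    have hp₁ : (0 : ℤ) ≤ p - 1 := by omega
    have hq₁ : (0 : ℤ) ≤ q - 1 := by omega
    linarith [mul_nonneg (mul_nonneg (Int.natCast_nonneg α) hb) hp₁,
      mul_nonneg (mul_nonneg (Int.natCast_nonneg β) ha) hq₁, mul_nonneg ha hb,
      mul_nonneg (mul_nonneg (Int.natCast_nonneg α) (Int.natCast_nonneg β)) hM]
  obtain ⟨x₀, hx₀, z₀, hz₀, M', hM'⟩ :=
    exists_eq_mul_add_mul_add_mul hα hβ hpβ hqα N
  have hMM' : M + 1 ≤ M' := by
    by_contra! h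
    have h₁ : (α * p * x₀ : ℤ) ≤ α * p * (β - 1) :=
      mul_le_mul_of_nonneg_left (by omega) (by positivity)
    have h₂ : (β * q * z₀ : ℤ) ≤ β * q * (α - 1) :=
      mul_le_mul_of_nonneg_left (by omega) (by positivity)
    have h₃ : (α * β * M' : ℤ) ≤ α * β * M :=
      mul_le_mul_of_nonneg_left (by omega) (by positivity)
    linarith
  rw [repCountZ, if_pos h₀, repCount_eq_card_triangleLattice hα hβ hp hq hpβ hqα hx₀ hz₀
    (by rwa [Int.toNat_of_nonneg h₀])]
  exact card_le_card (triangleLattice_mono hp hq hMM')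

theorem genFrob_eq_of_card_triangleLattice (hα : 0 < α) (hβ : 0 < β) (hp : 0 < p) (hq : 0 < q)
    (hpβ : Nat.Coprime (α * p) β) (hqα : Nat.Coprime (β * q) α) {s : ℕ} {M : ℤ}
    (hle : (triangleLattice p q M).card ≤ s) (hlt : s < (triangleLattice p q (M + 1)).card) :
    genFrob ![α * p, α * β, β * q] s
      = α * p * (β - 1 : ℤ) + β * q * (α - 1 : ℤ) + α * β * M := by
  have hM : 0 ≤ M + 1 := by
    obtain ⟨ij, hij⟩ := card_pos.mp (by omega : 0 < (triangleLattice p q (M + 1)).card)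
    have := (mem_triangleLattice hp hq).mp hij
    have : (0 : ℤ) ≤ p * ij.1 + q * ij.2 := by positivity
    linarith
  refine IsGreatest.csSup_eq
    ⟨(repCountZ_le_card_triangleLattice hα hβ hp hq hpβ hqα M).trans hle, fun N hN => ?_⟩
  by_contra! h
  have := card_triangleLattice_le_repCountZ hα hβ hp hq hpβ hqα hM h
  have hN' : repCountZ ![α * p, α * β, β * q] N ≤ s := hN
  omega

end Reduction

section RowCount

variable {p q : ℕ}

theorem card_triangleLattice_le_sum {M : ℤ} (K : ℕ) (r : ℕ → ℕ)
    (h : ∀ i j : ℕ, (p * i + q * j : ℤ) ≤ M → i ≤ K ∧ j < r (K - i)) :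
    (triangleLattice p q M).card ≤ ∑ t ∈ range (K + 1), r t :=
  calc (triangleLattice p q M).card
      ≤ (((range (K + 1)).sigma fun t => range (r t)).image
          fun tj => (K - tj.1, tj.2)).card := by
        refine card_le_card fun ij hij => ?_
        obtain ⟨hi, hj⟩ := h ij.1 ij.2 (mem_filter.mp hij).2
        exact mem_image.mpr ⟨⟨K - ij.1, ij.2⟩, by simp [hj], by ext <;> simp; omega⟩
    _ ≤ ((range (K + 1)).sigma fun t => range (r t)).card := card_image_le
    _ = ∑ t ∈ range (K + 1), r t := by simp

theorem sum_le_card_triangleLattice (hp : 0 < p) (hq : 0 < q) {M : ℤ} (K : ℕ) (r : ℕ → ℕ)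
    (h : ∀ t ≤ K, ∀ j < r t, (p * (K - t : ℕ) + q * j : ℤ) ≤ M) :
    ∑ t ∈ range (K + 1), r t ≤ (triangleLattice p q M).card :=
  calc ∑ t ∈ range (K + 1), r t = ((range (K + 1)).sigma fun t => range (r t)).card := by simp
    _ = (((range (K + 1)).sigma fun t => range (r t)).image
          fun tj => (K - tj.1, tj.2)).card := by
        refine (card_image_of_injOn fun tj htj tj' htj' heq => ?_).symm
        simp only [coe_sigma, Set.mem_sigma_iff, coe_range, Set.mem_Iio] at htj htj'
        simp only [Prod.mk.injEq] at heq
        ext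
        · omega
        · exact heq_of_eq heq.2
    _ ≤ (triangleLattice p q M).card := by
        refine card_le_card fun ij hij => ?_
        obtain ⟨⟨t, j⟩, htj, rfl⟩ := mem_image.mp hij
        simp only [mem_sigma, mem_range] at htj
        exact (mem_triangleLattice hp hq).mpr (h t (by omega) j htj.2)

end RowCount

-- Since `(2m+1) t = 2 (m+2) t - 3t`, for large `m` the row `i = K - t` of the triangle
-- `(2m+1) i + (m+2) j ≤ (2m+1) K + e (m+2) + 3c - 1` has `rowLength e c t` points.
def rowLength (e c t : ℕ) : ℕ := 2 * t + e + if t < c then 1 else 0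

theorem sum_rowLength (K e d : ℕ) (hd : d ≤ K + 1) :
    ∑ t ∈ range (K + 1), rowLength e d t = K * (K + 1) + e * (K + 1) + d := by
  have h₁ : ∑ t ∈ range (K + 1), 2 * t = K * (K + 1) := by
    rw [← mul_sum, mul_comm, sum_range_id_mul_two, Nat.add_sub_cancel, mul_comm]
  have h₂ : ∑ t ∈ range (K + 1), (if t < d then 1 else 0) = d := by
    rw [sum_boole, Nat.cast_id, show (range (K + 1)).filter (· < d) = range d by ext; simp; omega,
      card_range]
  simp only [rowLength, sum_add_distrib, h₁, h₂, sum_const, card_range, smul_eq_mul]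
  ring

section Rows

variable {m K e c : ℕ}

theorem lt_rowLength_of_le (he : e ≤ 1) (hce : 3 * (c + e) ≤ m + 1) {i j : ℕ}
    (h : ((2 * m + 1 : ℕ) * i + (m + 2 : ℕ) * j : ℤ)
      ≤ (2 * m + 1) * K + e * (m + 2) + 3 * c - 1) :
    i ≤ K ∧ j < rowLength e c (K - i) := by
  push_cast at h
  have hce' : (3 * (c + e) : ℤ) ≤ m + 1 := by exact_mod_cast hce
  have hj₀ : (0 : ℤ) ≤ (m + 2) * j := by positivity
  have hi : i ≤ K := by
    by_contra! hi
    have : ((2 * m + 1) * (K + 1) : ℤ) ≤ (2 * m + 1) * i :=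
      mul_le_mul_of_nonneg_left (by exact_mod_cast hi) (by positivity)
    obtain rfl | rfl : e = 0 ∨ e = 1 := by omega
    all_goals push_cast at h hce'; linarith
  refine ⟨hi, ?_⟩
  obtain ⟨t, rfl⟩ : ∃ t, K = i + t := ⟨K - i, by omega⟩
  rw [Nat.add_sub_cancel_left]
  push_cast at h
  by_contra! hj
  have hmul : ((m + 2) * rowLength e c t : ℤ) ≤ (m + 2) * j :=
    mul_le_mul_of_nonneg_left (by exact_mod_cast hj) (by positivity)
  unfold rowLength at hmul
  split_ifs at hmul with htc
  · have : (t : ℤ) < c := by exact_mod_cast htc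
    push_cast at hmul
    nlinarith
  · have : (c : ℤ) ≤ t := by exact_mod_cast not_lt.mp htc
    push_cast at hmul
    nlinarith

theorem le_of_lt_rowLength (hK : 3 * K ≤ m + 1) {t j : ℕ} (ht : t ≤ K)
    (hj : j < rowLength e (c + 1) t) :
    ((2 * m + 1 : ℕ) * (K - t : ℕ) + (m + 2 : ℕ) * j : ℤ)
      ≤ (2 * m + 1) * K + e * (m + 2) + 3 * c - 1 + 1 := by
  have hK' : (3 * K : ℤ) ≤ m + 1 := by exact_mod_cast hK
  have ht' : (t : ℤ) ≤ K := by exact_mod_cast ht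
  push_cast [Nat.cast_sub ht]
  unfold rowLength at hj
  split_ifs at hj with htc
  · have hmul : ((m + 2) * j : ℤ) ≤ (m + 2) * (2 * t + e) :=
      mul_le_mul_of_nonneg_left (by exact_mod_cast Nat.lt_succ_iff.mp hj) (by positivity)
    have : (t : ℤ) ≤ c := by exact_mod_cast Nat.lt_succ_iff.mp htc
    nlinarith
  · have hmul : ((m + 2) * (j + 1) : ℤ) ≤ (m + 2) * (2 * t + e) :=
      mul_le_mul_of_nonneg_left (by exact_mod_cast hj) (by positivity)
    nlinarith

theorem card_triangleLattice_odd_le (he : e ≤ 1) (hce : 3 * (c + e) ≤ m + 1)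
    (hc : c ≤ K + 1) :
    (triangleLattice (2 * m + 1) (m + 2) ((2 * m + 1) * K + e * (m + 2) + 3 * c - 1)).card
      ≤ K * (K + 1) + e * (K + 1) + c :=
  (card_triangleLattice_le_sum K (rowLength e c) fun _ _ h => lt_rowLength_of_le he hce h).trans
    (sum_rowLength K e c hc).le

theorem lt_card_triangleLattice_odd (hK : 3 * K ≤ m + 1) (hc : c ≤ K) :
    K * (K + 1) + e * (K + 1) + c
      < (triangleLattice (2 * m + 1) (m + 2)
          ((2 * m + 1) * K + e * (m + 2) + 3 * c - 1 + 1)).card := by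
  have := sum_le_card_triangleLattice (by omega) (by omega) K (rowLength e (c + 1))
    fun _ ht _ hj => le_of_lt_rowLength (c := c) hK ht hj
  rw [sum_rowLength K e (c + 1) (by omega)] at this
  omega

end Rows

theorem genFrob_odd_triangular {m K e c : ℕ} (he : e ≤ 1) (hc : c ≤ K) (hK : 3 * K ≤ m + 1)
    (hce : 3 * (c + e) ≤ m + 1) :
    genFrob ![(m + 1) * (2 * m + 1), (m + 1) * (2 * m + 3), (2 * m + 3) * (m + 2)]
        (K * (K + 1) + e * (K + 1) + c) =
      (m + 1) * (2 * m + 3) * (3 * m + (2 * m + 1) * K + e * (m + 2) + 3 * c : ℤ) - 1 := by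
  have hpβ : Nat.Coprime ((m + 1) * (2 * m + 1)) (2 * m + 3) := by
    rw [show (m + 1) * (2 * m + 1) = 1 + m * (2 * m + 3) by ring, Nat.coprime_add_mul_right_left]
    exact Nat.coprime_one_left _
  have hqα : Nat.Coprime ((2 * m + 3) * (m + 2)) (m + 1) := by
    rw [show (2 * m + 3) * (m + 2) = 1 + (2 * m + 5) * (m + 1) by ring,
      Nat.coprime_add_mul_right_left]
    exact Nat.coprime_one_left _
  rw [genFrob_eq_of_card_triangleLattice (by omega) (by omega) (by omega) (by omega) hpβ hqα
    (card_triangleLattice_odd_le he hce (by omega)) (lt_card_triangleLattice_odd hK hc)]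
  push_cast
  ring

theorem exists_sqrt_decomposition (s : ℕ) :
    ∃ K e c : ℕ, e ≤ 1 ∧ c ≤ K ∧ s = K * (K + 1) + e * (K + 1) + c ∧
      deltaS s = 1 - e ∧ qS s = 2 * K + 3 + e ∧ cS s = c := by
  have hk₁ := Nat.sqrt_le' s
  have hk₂ := Nat.lt_succ_sqrt' s
  by_cases hδ : Nat.sqrt s ^ 2 + Nat.sqrt s ≤ s
  · obtain ⟨c, hc⟩ := Nat.exists_eq_add_of_le hδ
    have hδ₁ : deltaS s = 1 := if_pos hδ
    have hcZ : (s : ℤ) = Nat.sqrt s ^ 2 + Nat.sqrt s + c := by exact_mod_cast hc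
    refine ⟨Nat.sqrt s, 0, c, zero_le_one, by nlinarith, by linarith, by rw [hδ₁]; rfl,
      by rw [qS, hδ₁]; ring, by rw [cS, hδ₁, hcZ]; ring⟩
  · obtain ⟨c, hc⟩ := Nat.exists_eq_add_of_le hk₁
    obtain ⟨K, hK⟩ : ∃ K, Nat.sqrt s = K + 1 :=
      Nat.exists_eq_succ_of_ne_zero (by rintro h; simp [h] at hδ)
    have hδ₀ : deltaS s = 0 := if_neg hδ
    have hcZ : (s : ℤ) = Nat.sqrt s ^ 2 + c := by exact_mod_cast hc
    rw [hK] at hδ hc hcZ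
    refine ⟨K, 1, c, le_rfl, by nlinarith, by linarith, by rw [hδ₀]; rfl,
      by rw [qS, hδ₀, hK]; push_cast; ring, by rw [cS, hδ₀, hcZ, hK]; ring⟩

theorem three_mul_le_of_NOdd_lt {s m j : ℕ} (h : NOdd s < 2 * m + 1)
    (hj : j * (j + 1) ≤ s + 1) : 3 * j ≤ m + 1 := by
  have : 2 * j + 1 ≤ Nat.sqrt (4 * s + 5) := Nat.le_sqrt'.mpr (by nlinarith)
  unfold NOdd at h
  omega

theorem t_eq_of_mul_succ_eq_two_mul {n a : ℕ} (h : n * (n + 1) = 2 * a) : t n = a := by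
  unfold t
  omega

/-- for odd `n > N_s^odd`,
`g(t_n, t_{n+1}, t_{n+2}; s) = ((n+1)(n+2)/4)(q_s n + 6 c_s - 3 δ_s) - 1`. -/
theorem stmt_1 (s n : ℕ) (hn : Odd n) (hbound : (n : ℤ) > NOdd s) :
    genFrob ![t n, t (n + 1), t (n + 2)] s =
      ((n : ℤ) + 1) * ((n : ℤ) + 2) * (qS s * (n : ℤ) + 6 * cS s - 3 * deltaS s) / 4 - 1 := by
  obtain ⟨m, rfl⟩ := hn
  obtain ⟨K, e, c, he, hc, hs, hδ, hq, hcs⟩ := exists_sqrt_decomposition s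
  have hbound' : NOdd s < 2 * m + 1 := by exact_mod_cast hbound
  have hK : 3 * K ≤ m + 1 := three_mul_le_of_NOdd_lt hbound' (by rw [hs]; nlinarith)
  have hce : 3 * (c + e) ≤ m + 1 :=
    three_mul_le_of_NOdd_lt hbound' (by rw [hs]; interval_cases e <;> nlinarith)
  rw [t_eq_of_mul_succ_eq_two_mul (n := 2 * m + 1) (a := (m + 1) * (2 * m + 1)) (by ring),
    t_eq_of_mul_succ_eq_two_mul (n := 2 * m + 1 + 1) (a := (m + 1) * (2 * m + 3)) (by ring),
    t_eq_of_mul_succ_eq_two_mul (n := 2 * m + 1 + 2) (a := (2 * m + 3) * (m + 2)) (by ring),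
    hδ, hq, hcs, hs, genFrob_odd_triangular he hc hK hce]
  congr 1
  symm
  apply Int.ediv_eq_of_eq_mul_right (by norm_num)
  push_cast
  ring
end

section
/- Let s ≥ 0 and let n be an even integer with n > N_{s+1}^even. If s + 1 ∈ B, i.e. s + 1 = k² or s + 1 = k(k+1) for some integer k ≥ 1, then g(t_n, t_{n+1}, t_{n+2}; s+1) − g(t_n, t_{n+1}, t_{n+2}; s) = (n − 6k + 6)(n+1)(n+2)/4. -/
open Finset

/-!
For even `n = 2m` the weights are `a = m(2m+1)`, `b = (m+1)(2m+1)`, `c = (m+1)(2m+3)`.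
Since `a ≡ 1 (mod m+1)`, `c ≡ 1 (mod 2m+1)` and `b` is divisible by both moduli, every `N ≥ 0`
is uniquely `N = a x₀ + c z₀ + b M` with `x₀ ≤ m`, `z₀ ≤ 2m`, `M ∈ ℤ`, and the representations
`a x + b y + c z = N` are exactly `x = x₀ + (m+1)u`, `z = z₀ + (2m+1)v`,
`y = M - m u - (2m+3) v`. Hence `d(N)` is the number of lattice points `(u, v) ≥ 0` with
`m u + (2m+3) v ≤ M`, which depends on `M` alone and increases with it, so
`g(s) = a m + 2m c + b F` for the largest `F` whose count is at most `s`. Counting the lattice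
points row by row gives them in closed form for `M = qm + r` with `r < m` and `q` small
against `m`; the thresholds for `s + 1 = k²` and `s + 1 = k(k+1)` sit just below the corners
`(2m+3)(k-1)`, `(2k-1)m`, `(2m+3)(k-1) + m` and `2km`, and the gaps between them are all
`(m - 3k + 3) b`.
-/

namespace EvenTriangular

lemma t_pos {n : ℕ} (hn : 0 < n) : 0 < t n := by
  unfold t
  exact Nat.div_pos (by nlinarith) two_pos

lemma t_two_mul (m : ℕ) : t (2 * m) = m * (2 * m + 1) := by
  rw [t, show 2 * m * (2 * m + 1) = 2 * (m * (2 * m + 1)) by ring,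
    Nat.mul_div_cancel_left _ two_pos]

lemma t_two_mul_add_one (m : ℕ) : t (2 * m + 1) = (m + 1) * (2 * m + 1) := by
  rw [t, show (2 * m + 1) * (2 * m + 1 + 1) = 2 * ((m + 1) * (2 * m + 1)) by ring,
    Nat.mul_div_cancel_left _ two_pos]

lemma t_two_mul_add_two (m : ℕ) : t (2 * m + 2) = (m + 1) * (2 * m + 3) := by
  rw [t, show (2 * m + 2) * (2 * m + 2 + 1) = 2 * ((m + 1) * (2 * m + 3)) by ring,
    Nat.mul_div_cancel_left _ two_pos]

variable {m : ℕ}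

def lattice (m M : ℕ) : Finset (ℕ × ℕ) :=
  (range (M + 1) ×ˢ range (M + 1)).filter fun p => m * p.1 + (2 * m + 3) * p.2 ≤ M

def latticeCount (m : ℕ) (M : ℤ) : ℕ :=
  if 0 ≤ M then (lattice m M.toNat).card else 0

lemma mem_lattice (hm : 0 < m) {M : ℕ} {p : ℕ × ℕ} :
    p ∈ lattice m M ↔ m * p.1 + (2 * m + 3) * p.2 ≤ M := by
  simp only [lattice, mem_filter, mem_product, mem_range, and_iff_right_iff_imp]
  intro h
  constructor <;> nlinarith

lemma latticeCount_mono (hm : 0 < m) : Monotone (latticeCount m) := by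
  intro M M' h
  unfold latticeCount
  split_ifs with h₁ h₂ h₂
  · refine card_le_card fun p hp => ?_
    rw [mem_lattice hm] at hp ⊢
    omega
  · omega
  · exact Nat.zero_le _
  · exact le_rfl

lemma latticeCount_natCast_sub_one_lt (hm : 0 < m) (u v : ℕ) :
    latticeCount m ((m * u + (2 * m + 3) * v : ℕ) - 1) <
      latticeCount m (m * u + (2 * m + 3) * v : ℕ) := by
  have hmem : (u, v) ∈ lattice m (m * u + (2 * m + 3) * v) := (mem_lattice hm).2 le_rfl
  rw [latticeCount, latticeCount, if_pos (Int.natCast_nonneg _), Int.toNat_natCast]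
  split_ifs with h
  · refine card_lt_card ((ssubset_iff_of_subset fun p hp => ?_).2 ⟨(u, v), hmem, ?_⟩)
    · rw [mem_lattice hm] at hp ⊢
      omega
    · rw [mem_lattice hm]
      dsimp only
      omega
  · exact card_pos.2 ⟨_, hmem⟩

lemma mul_add_le_mul_add_iff {q r u v : ℕ} (hr : r < m) (hv : u + 2 * v < q → 3 * v ≤ m) :
    m * u + (2 * m + 3) * v ≤ q * m + r ↔ u + 2 * v < q ∨ (u + 2 * v = q ∧ 3 * v ≤ r) := by
  rw [show m * u + (2 * m + 3) * v = m * (u + 2 * v) + 3 * v by ring, mul_comm q]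
  rcases lt_trichotomy (u + 2 * v) q with h | h | h
  · have := Nat.mul_le_mul_left m h
    have := hv h
    simp only [h, true_or, iff_true]
    nlinarith
  · subst h
    omega
  · have := Nat.mul_le_mul_left m h
    simp only [not_lt.2 h.le, h.ne', false_and, or_self, iff_false, not_le]
    nlinarith

lemma card_lattice_eq_sum (M : ℕ) :
    (lattice m M).card =
      ∑ v ∈ range (M + 1), ((range (M + 1)).filter fun u => m * u + (2 * m + 3) * v ≤ M).card := by
  simp only [lattice, card_filter, sum_product_right]

lemma sum_range_add_two_mul_sub (d j : ℕ) :
    ∑ v ∈ range (j + 1), (d + 2 * j - 2 * v) = (j + 1) * (j + d) := by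
  induction j with
  | zero => simp
  | succ j ih =>
    rw [sum_range_succ', sum_congr rfl fun v _ =>
      show d + 2 * (j + 1) - 2 * (v + 1) = d + 2 * j - 2 * v by omega, ih]
    ring_nf
    omega

lemma card_filter_mul_add_le_mul_add (hm : 0 < m) {q r : ℕ} (hr : r < m)
    (hq : ∀ v, 2 * v < q → 3 * v ≤ m) (v : ℕ) :
    ((range (q * m + r + 1)).filter fun u => m * u + (2 * m + 3) * v ≤ q * m + r).card =
      q - 2 * v + if 2 * v ≤ q ∧ 3 * v ≤ r then 1 else 0 := by
  have hqM : q ≤ q * m := Nat.le_mul_of_pos_right q hm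
  rw [← card_range (q - 2 * v + _)]
  congr 1
  ext u
  rw [mem_filter, mem_range, mem_range,
    mul_add_le_mul_add_iff hr fun h => hq v (by omega)]
  split_ifs <;> omega

theorem latticeCount_two_mul_add_mul_add (hm : 0 < m) {j d r : ℕ} (hd : d ≤ 1) (hr : r < m)
    (hj : 3 * (j + d) ≤ m + 3) :
    latticeCount m ((2 * j + d) * m + r : ℕ) = (j + 1) * (j + d) + min j (r / 3) + 1 := by
  set q := 2 * j + d
  have hqM : q ≤ q * m := Nat.le_mul_of_pos_right q hm
  have hrow := card_filter_mul_add_le_mul_add hm hr (q := q) fun v hv => by omega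
  rw [latticeCount, if_pos (Int.natCast_nonneg _), Int.toNat_natCast, card_lattice_eq_sum,
    sum_congr rfl fun v _ => hrow v,
    ← sum_subset (range_subset_range.2 (show j + 1 ≤ q * m + r + 1 by omega))
      fun v _ hv => by rw [mem_range] at hv; rw [if_neg (by omega)]; omega,
    sum_add_distrib, ← card_filter,
    sum_congr rfl fun v hv => show q - 2 * v = d + 2 * j - 2 * v by omega,
    sum_range_add_two_mul_sub, add_assoc]
  congr 2
  rw [← card_range (min j (r / 3) + 1)]
  congr 1
  ext v
  simp only [mem_filter, mem_range]
  omega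

def solutions (a₀ a₁ a₂ N : ℕ) : Finset (ℕ × ℕ × ℕ) :=
  (range (N + 1) ×ˢ range (N + 1) ×ˢ range (N + 1)).filter
    fun p => a₀ * p.1 + a₁ * p.2.1 + a₂ * p.2.2 = N

lemma mem_solutions {a₀ a₁ a₂ N : ℕ} (h₀ : 0 < a₀) (h₁ : 0 < a₁) (h₂ : 0 < a₂)
    {p : ℕ × ℕ × ℕ} : p ∈ solutions a₀ a₁ a₂ N ↔ a₀ * p.1 + a₁ * p.2.1 + a₂ * p.2.2 = N := by
  simp only [solutions, mem_filter, mem_product, mem_range, and_iff_right_iff_imp]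
  intro h
  refine ⟨?_, ?_, ?_⟩ <;> nlinarith

lemma repCount_three (a₀ a₁ a₂ N : ℕ) :
    repCount ![a₀, a₁, a₂] N = (solutions a₀ a₁ a₂ N).card := by
  refine card_bij (fun x _ => ((x 0 : ℕ), (x 1 : ℕ), (x 2 : ℕ))) ?_ ?_ ?_
  · intro x hx
    simp only [mem_filter, mem_univ, true_and, Fin.sum_univ_three] at hx
    simp only [solutions, mem_filter, mem_product, mem_range]
    exact ⟨⟨(x 0).is_lt, (x 1).is_lt, (x 2).is_lt⟩, by simpa using hx⟩
  · intro x _ y _ hxy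
    simp only [Prod.mk.injEq] at hxy
    funext i
    fin_cases i
    exacts [Fin.ext hxy.1, Fin.ext hxy.2.1, Fin.ext hxy.2.2]
  · rintro ⟨x, y, z⟩ hp
    simp only [solutions, mem_filter, mem_product, mem_range] at hp
    obtain ⟨⟨hx, hy, hz⟩, heq⟩ := hp
    refine ⟨![⟨x, hx⟩, ⟨y, hy⟩, ⟨z, hz⟩], ?_, rfl⟩
    simpa [Fin.sum_univ_three] using heq

lemma exists_eq_add_mul_of_dvd_sub {d x₀ x : ℕ} (h₀ : x₀ < d) (hd : (d : ℤ) ∣ x - x₀) :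
    ∃ u, x = x₀ + d * u := by
  have hmod : x₀ % d = x % d := Nat.modEq_iff_dvd.2 hd
  rw [Nat.mod_eq_of_lt h₀] at hmod
  exact ⟨x / d, by rw [hmod, Nat.mod_add_div]⟩

lemma exists_lattice_point_of_representation {x₀ z₀ : ℕ} (hx₀ : x₀ ≤ m) (hz₀ : z₀ ≤ 2 * m)
    {M : ℤ} {x y z : ℕ}
    (h : (t (2 * m) * x + t (2 * m + 1) * y + t (2 * m + 2) * z : ℤ) =
      t (2 * m) * x₀ + t (2 * m + 2) * z₀ + t (2 * m + 1) * M) :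
    ∃ u v, x = x₀ + (m + 1) * u ∧ z = z₀ + (2 * m + 1) * v ∧
      M = (m * u + (2 * m + 3) * v + y : ℕ) := by
  push_cast [t_two_mul, t_two_mul_add_one, t_two_mul_add_two] at h
  obtain ⟨u, rfl⟩ := exists_eq_add_mul_of_dvd_sub (d := m + 1) (x₀ := x₀) (x := x) (by omega)
    ⟨(2 * m + 1) * (M - y) - (2 * m + 3) * ((z : ℤ) - z₀) - (2 * m - 1) * ((x : ℤ) - x₀),
      by push_cast; linear_combination h⟩
  obtain ⟨v, rfl⟩ := exists_eq_add_mul_of_dvd_sub (d := 2 * m + 1) (x₀ := z₀) (x := z) (by omega)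
    ⟨(m + 1) * (M - y) - m * ((x₀ + (m + 1) * u : ℕ) - (x₀ : ℤ)) - (m + 2) * ((z : ℤ) - z₀),
      by push_cast at h ⊢; linear_combination h⟩
  refine ⟨u, v, rfl, rfl, mul_right_cancel₀ (b := ((m : ℤ) + 1) * (2 * m + 1)) (by positivity) ?_⟩
  push_cast at h ⊢
  linear_combination -h

theorem repCount_eq_latticeCount (hm : 0 < m) {x₀ z₀ : ℕ} (hx₀ : x₀ ≤ m) (hz₀ : z₀ ≤ 2 * m)
    {M : ℤ} {N : ℕ} (hN : (N : ℤ) = t (2 * m) * x₀ + t (2 * m + 2) * z₀ + t (2 * m + 1) * M) :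
    repCount ![t (2 * m), t (2 * m + 1), t (2 * m + 2)] N = latticeCount m M := by
  have hsol : ∀ {p : ℕ × ℕ × ℕ}, p ∈ solutions (t (2 * m)) (t (2 * m + 1)) (t (2 * m + 2)) N ↔
      ∃ u v, p.1 = x₀ + (m + 1) * u ∧ p.2.2 = z₀ + (2 * m + 1) * v ∧
        M = (m * u + (2 * m + 3) * v + p.2.1 : ℕ) := by
    intro p
    rw [mem_solutions (t_pos (by omega)) (t_pos (by omega)) (t_pos (by omega))]
    constructor
    · intro h
      exact exists_lattice_point_of_representation hx₀ hz₀ (by rw [← hN]; exact_mod_cast h)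
    · rintro ⟨u, v, hx, hz, rfl⟩
      have : (t (2 * m) * p.1 + t (2 * m + 1) * p.2.1 + t (2 * m + 2) * p.2.2 : ℤ) = N := by
        rw [hN, hx, hz]
        push_cast [t_two_mul, t_two_mul_add_one, t_two_mul_add_two]
        ring
      exact_mod_cast this
  rw [repCount_three, latticeCount]
  split_ifs with hM
  · lift M to ℕ using hM
    rw [Int.toNat_natCast]
    symm
    refine card_bij (fun p _ => (x₀ + (m + 1) * p.1, M - (m * p.1 + (2 * m + 3) * p.2),
      z₀ + (2 * m + 1) * p.2)) (fun p hp => ?_) (fun p _ p' _ h => ?_) (fun p hp => ?_)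
    · rw [mem_lattice hm] at hp
      exact hsol.2 ⟨p.1, p.2, rfl, rfl, by dsimp only; rw [Nat.cast_inj]; omega⟩
    · simp only [Prod.mk.injEq] at h
      exact Prod.ext (by nlinarith [h.1]) (by nlinarith [h.2.2])
    · obtain ⟨u, v, hx, hz, hM⟩ := hsol.1 hp
      rw [Nat.cast_inj] at hM
      refine ⟨(u, v), (mem_lattice hm).2 (by dsimp only; omega), ?_⟩
      ext <;> simp only <;> omega
  · rw [card_eq_zero, eq_empty_iff_forall_notMem]
    intro p hp
    obtain ⟨u, v, -, -, rfl⟩ := hsol.1 hp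
    exact hM (Int.natCast_nonneg _)

lemma exists_decomposition (N : ℕ) : ∃ x₀ z₀ : ℕ, ∃ M : ℤ, x₀ ≤ m ∧ z₀ ≤ 2 * m ∧
    (N : ℤ) = t (2 * m) * x₀ + t (2 * m + 2) * z₀ + t (2 * m + 1) * M := by
  set x₀ := N % (m + 1)
  set z₀ := N % (2 * m + 1)
  have hdiv₁ : ((m : ℤ) + 1) * (N / (m + 1) : ℕ) + x₀ = N := by
    exact_mod_cast Nat.div_add_mod N (m + 1)
  have hdiv₂ : (2 * (m : ℤ) + 1) * (N / (2 * m + 1) : ℕ) + z₀ = N := by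
    exact_mod_cast Nat.div_add_mod N (2 * m + 1)
  have hdvd₁ : ((m : ℤ) + 1) ∣ N - m * (2 * m + 1) * x₀ - (m + 1) * (2 * m + 3) * z₀ :=
    ⟨(N / (m + 1) : ℕ) - (2 * m - 1) * x₀ - (2 * m + 3) * z₀, by linear_combination -hdiv₁⟩
  have hdvd₂ : (2 * (m : ℤ) + 1) ∣ N - m * (2 * m + 1) * x₀ - (m + 1) * (2 * m + 3) * z₀ :=
    ⟨(N / (2 * m + 1) : ℕ) - m * x₀ - (m + 2) * z₀, by linear_combination -hdiv₂⟩
  obtain ⟨M, hM⟩ := (show IsCoprime ((m : ℤ) + 1) (2 * m + 1) from ⟨2, -1, by ring⟩).mul_dvd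
    hdvd₁ hdvd₂
  refine ⟨x₀, z₀, M, Nat.lt_succ_iff.1 (Nat.mod_lt _ m.succ_pos),
    Nat.lt_succ_iff.1 (Nat.mod_lt _ (2 * m).succ_pos), ?_⟩
  push_cast [t_two_mul, t_two_mul_add_one, t_two_mul_add_two]
  linear_combination hM

theorem genFrob_eq (hm : 0 < m) {s : ℕ} {F : ℤ} (hle : latticeCount m F ≤ s)
    (hlt : s < latticeCount m (F + 1)) :
    genFrob ![t (2 * m), t (2 * m + 1), t (2 * m + 2)] s =
      t (2 * m) * m + t (2 * m + 2) * (2 * m) + t (2 * m + 1) * F := by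
  set G : ℤ := t (2 * m) * m + t (2 * m + 2) * (2 * m) + t (2 * m + 1) * F
  have hF : -1 ≤ F := by
    by_contra! h
    rw [latticeCount, if_neg (by omega)] at hlt
    omega
  have ht : (t (2 * m + 1) : ℤ) ≤ t (2 * m + 2) * (2 * m) := by
    push_cast [t_two_mul_add_one, t_two_mul_add_two]
    have : (1 : ℤ) ≤ m := by exact_mod_cast hm
    have : (0 : ℤ) ≤ ((m : ℤ) + 1) * (4 * m ^ 2 + 4 * m - 1) :=
      mul_nonneg (by positivity) (by nlinarith)
    nlinarith
  have hG : 0 ≤ G := by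
    have : (0 : ℤ) ≤ t (2 * m + 1) * (F + 1) := mul_nonneg (by positivity) (by omega)
    have : (0 : ℤ) ≤ t (2 * m) * m := by positivity
    linarith
  have hrepCount {N : ℤ} (hN : 0 ≤ N) {x₀ z₀ : ℕ} (hx₀ : x₀ ≤ m) (hz₀ : z₀ ≤ 2 * m) {M : ℤ}
      (h : N = t (2 * m) * x₀ + t (2 * m + 2) * z₀ + t (2 * m + 1) * M) :
      repCountZ ![t (2 * m), t (2 * m + 1), t (2 * m + 2)] N = latticeCount m M := by
    rw [repCountZ, if_pos hN]
    exact repCount_eq_latticeCount hm hx₀ hz₀ (by rw [Int.toNat_of_nonneg hN, h])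
  refine IsGreatest.csSup_eq ⟨(hrepCount hG le_rfl le_rfl (by push_cast; ring)).trans_le hle, ?_⟩
  intro N hN
  by_contra! hGN
  obtain ⟨x₀, z₀, M, hx₀, hz₀, hdec⟩ := exists_decomposition (m := m) N.toNat
  rw [Int.toNat_of_nonneg (hG.trans hGN.le)] at hdec
  have hFM : F + 1 ≤ M := by
    by_contra! hMF
    have : (0 : ℤ) ≤ t (2 * m) * ((m : ℤ) - x₀) := mul_nonneg (by positivity) (by omega)
    have : (0 : ℤ) ≤ t (2 * m + 2) * (2 * (m : ℤ) - z₀) := mul_nonneg (by positivity) (by omega)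
    have : (0 : ℤ) ≤ t (2 * m + 1) * (F - M) := mul_nonneg (by positivity) (by omega)
    linarith
  have := latticeCount_mono hm hFM
  change _ ≤ s at hN
  rw [hrepCount (hG.trans hGN.le) hx₀ hz₀ hdec] at hN
  omega

theorem genFrob_eq_of_corner (hm : 0 < m) {s u v : ℕ}
    (h : latticeCount m (m * u + (2 * m + 3) * v : ℕ) = s + 1) :
    genFrob ![t (2 * m), t (2 * m + 1), t (2 * m + 2)] s =
      t (2 * m) * m + t (2 * m + 2) * (2 * m) +
        t (2 * m + 1) * ((m * u + (2 * m + 3) * v : ℕ) - 1 : ℤ) := by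
  have := latticeCount_natCast_sub_one_lt hm u v
  exact genFrob_eq hm (by omega) (by rw [sub_add_cancel]; omega)

variable {s j : ℕ}

theorem genFrob_succ_sub_genFrob_of_eq_sq (hjm : 3 * j < m) (h : s + 1 = (j + 1) ^ 2) :
    genFrob ![t (2 * m), t (2 * m + 1), t (2 * m + 2)] (s + 1) -
      genFrob ![t (2 * m), t (2 * m + 1), t (2 * m + 2)] s = t (2 * m + 1) * ((m : ℤ) - 3 * j) := by
  have hm : 0 < m := by omega
  rw [genFrob_eq_of_corner hm (u := 2 * j + 1) (v := 0) ?_,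
    genFrob_eq_of_corner hm (u := 0) (v := j) ?_]
  · push_cast
    ring
  · rw [show m * 0 + (2 * m + 3) * j = (2 * j + 0) * m + 3 * j by ring,
      latticeCount_two_mul_add_mul_add hm (d := 0) (by norm_num) (by omega) (by omega),
      h, Nat.mul_div_cancel_left _ three_pos, min_self]
    ring
  · rw [show m * (2 * j + 1) + (2 * m + 3) * 0 = (2 * j + 1) * m + 0 by ring,
      latticeCount_two_mul_add_mul_add hm (d := 1) le_rfl (by omega) (by omega), h,
      Nat.zero_div, Nat.min_zero]
    ring

theorem genFrob_succ_sub_genFrob_of_eq_mul_succ (hjm : 3 * j < m)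
    (h : s + 1 = (j + 1) * (j + 2)) :
    genFrob ![t (2 * m), t (2 * m + 1), t (2 * m + 2)] (s + 1) -
      genFrob ![t (2 * m), t (2 * m + 1), t (2 * m + 2)] s = t (2 * m + 1) * ((m : ℤ) - 3 * j) := by
  have hm : 0 < m := by omega
  rw [genFrob_eq_of_corner hm (u := 2 * j + 2) (v := 0) ?_,
    genFrob_eq_of_corner hm (u := 1) (v := j) ?_]
  · push_cast
    ring
  · rw [show m * 1 + (2 * m + 3) * j = (2 * j + 1) * m + 3 * j by ring,
      latticeCount_two_mul_add_mul_add hm (d := 1) le_rfl (by omega) (by omega),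
      h, Nat.mul_div_cancel_left _ three_pos, min_self]
    ring
  · rw [show m * (2 * j + 2) + (2 * m + 3) * 0 = (2 * (j + 1) + 0) * m + 0 by ring,
      latticeCount_two_mul_add_mul_add hm (d := 0) (by norm_num) (by omega) (by omega), h,
      Nat.zero_div, Nat.min_zero]
    ring

end EvenTriangular

open EvenTriangular in
/-- for even `n > N_{s+1}^even`, if `s+1 = k²` or `s+1 = k(k+1)` with `k ≥ 1`, then
`g(…; s+1) - g(…; s) = (n - 6k + 6)(n+1)(n+2)/4`. -/
theorem stmt_3 (s n k : ℕ) (hn : Even n) (hbound : (n : ℤ) > NEven (s + 1))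
    (hk : 1 ≤ k) (hsk : s + 1 = k ^ 2 ∨ s + 1 = k * (k + 1)) :
    genFrob ![t n, t (n + 1), t (n + 2)] (s + 1) - genFrob ![t n, t (n + 1), t (n + 2)] s =
      ((n : ℤ) - 6 * k + 6) * ((n : ℤ) + 1) * ((n : ℤ) + 2) / 4 := by
  obtain ⟨m, rfl⟩ := hn.two_dvd
  obtain ⟨j, rfl⟩ : ∃ j, k = j + 1 := ⟨k - 1, by omega⟩
  have hsqrt : Nat.sqrt (s + 1 + 1) = j + 1 := by
    rcases hsk with h | h
    · rw [show s + 1 + 1 = (j + 1) * (j + 1) + 1 by rw [h]; ring, Nat.sqrt_add_eq _ (by omega)]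
    · rw [show s + 1 + 1 = (j + 1) * (j + 1) + (j + 2) by rw [h]; ring,
        Nat.sqrt_add_eq _ (by omega)]
  have hjm : 3 * j < m := by
    rw [NEven, hsqrt] at hbound
    push_cast at hbound
    omega
  have hrhs : (((2 * m : ℕ) : ℤ) - 6 * (j + 1 : ℕ) + 6) * ((2 * m : ℕ) + 1) * ((2 * m : ℕ) + 2) / 4
      = t (2 * m + 1) * ((m : ℤ) - 3 * j) := by
    rw [Int.ediv_eq_of_eq_mul_left four_ne_zero]
    push_cast [t_two_mul_add_one]
    ring
  rw [hrhs]
  rcases hsk with h | h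
  · exact genFrob_succ_sub_genFrob_of_eq_sq hjm h
  · exact genFrob_succ_sub_genFrob_of_eq_mul_succ hjm (by rw [h])
end

section
/- Let s ≥ 0 and let n be an odd integer with n > N_{s+1}^odd. If s + 1 = k² for some integer k ≥ 1, then g(t_n, t_{n+1}, t_{n+2}; s+1) − g(t_n, t_{n+1}, t_{n+2}; s) = (n − 6k + 9)(n+1)(n+2)/4. -/
open Finset

/-!
Write `n = 2w + 1`, so that `(t_n, t_{n+1}, t_{n+2}) = (A, B, C)` with `A = (w+1)(2w+1)`,
`B = (w+1)(2w+3)`, `C = (w+2)(2w+3)`. Because `B(2w+1) = (2w+3)A` and `C(w+1) = B(w+2)`, the pairs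
`(y, z)` with `By + Cz ≡ N (mod A)` are exactly `y = y₀ + j(2w+1) - γ(w+2)`, `z = z₀ + γ(w+1)`,
where `(y₀, z₀) ∈ [0, 2w] × [0, w]` is the unique reduced pair in the class of `N`; moreover
`By + Cz = By₀ + Cz₀ + (2w+3)Aj`. So `d(N)` is a sum over the admissible `j` of the number
`⌊(y₀ + j(2w+1))/(w+2)⌋ + 1` of admissible `γ`, which equals `2j + 1` while `0 ≤ y₀ - 3j < w + 2`
(as `2w + 1 = 2(w+2) - 3`); partial sums of these are therefore close to squares.

Take `M = y₀ + β(2w+1)` with `y₀ ≤ 2w`. The number `BM + Cw - A` lies in the class of `(y₀, w)`,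
where only the `j < β` are admissible; a number `N > BM + Cw - A` in the class of `(y, z)` admits
every `j ≤ β'` with `y + β'(2w+1) ≤ M`. So `g(A, B, C; s) = BM + Cw - A` as soon as the first
count is at most `s` and, for every `y`, some such `β'` yields more than `s` representations. For `s + 1 = k²`
this works with `M = (w+1) + k(2w+1)` at level `k²` and with `M = 2k(w+2) - 4` at level `k² - 1`;
the two values differ by `w + 5 - 3k`. The bound `n > N_{s+1}^odd` gives `3k ≤ w + 4`.
-/

theorem repCount_three_eq_card (A B C N : ℕ) (hA : 0 < A) :
    repCount ![A, B, C] N = #{p ∈ range (N + 1) ×ˢ range (N + 1) |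
      B * p.1 + C * p.2 ≤ N ∧ B * p.1 + C * p.2 ≡ N [MOD A]} := by
  have mem_iff (x : Fin 3 → Fin (N + 1)) :
      ∑ i, ![A, B, C] i * (x i : ℕ) = N ↔ A * x 0 + B * x 1 + C * x 2 = N := by
    simp [Fin.sum_univ_three]
  refine Finset.card_bij (fun x _ => ((x 1 : ℕ), (x 2 : ℕ))) ?_ ?_ ?_
  · intro x hx
    rw [mem_filter, mem_iff] at hx
    simp only [mem_filter, mem_product, mem_range]
    exact ⟨⟨(x 1).isLt, (x 2).isLt⟩, by omega, (Nat.modEq_iff_dvd' (by omega)).2 ⟨x 0, by omega⟩⟩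
  · intro x hx x' hx' hxx'
    rw [mem_filter, mem_iff] at hx hx'
    simp only [Prod.mk.injEq] at hxx'
    rw [hxx'.1, hxx'.2] at hx
    have h0 : A * x 0 = A * x' 0 := by omega
    funext i
    fin_cases i
    · exact Fin.ext (Nat.eq_of_mul_eq_mul_left hA h0)
    · exact Fin.ext hxx'.1
    · exact Fin.ext hxx'.2
  · rintro ⟨y, z⟩ hp
    simp only [mem_filter, mem_product, mem_range] at hp
    obtain ⟨⟨hy, hz⟩, hle, hmod⟩ := hp
    obtain ⟨x, hx⟩ := (Nat.modEq_iff_dvd' hle).1 hmod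
    have hxN : x ≤ N := by
      have := Nat.le_mul_of_pos_left x hA
      omega
    refine ⟨![⟨x, by omega⟩, ⟨y, hy⟩, ⟨z, hz⟩], ?_, rfl⟩
    rw [mem_filter, mem_iff]
    simp only [Matrix.cons_val_zero, Matrix.cons_val_one, Matrix.cons_val_two, Matrix.tail_cons,
      Matrix.head_cons]
    exact ⟨mem_univ _, by omega⟩

theorem sum_range_two_mul_add_one (k : ℕ) : ∑ j ∈ range k, (2*j+1) = k^2 := by
  induction k with
  | zero => simp
  | succ k ih => rw [sum_range_succ, ih]; ring

/-- For `n = 2w + 1`, the weights `(t_n, t_{n+1}, t_{n+2})`. -/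
def oddTriWeights (w : ℕ) : Fin 3 → ℕ := ![(w+1)*(2*w+1), (w+1)*(2*w+3), (w+2)*(2*w+3)]

/-- For fixed `j`, the representations in the residue class of `y₀` satisfying
`y + γ(w+2) = y₀ + j(2w+1)` are indexed by `γ ≤ (y₀ + j(2w+1))/(w+2)`. -/
def layerSize (w y₀ j : ℕ) : ℕ := (y₀ + j*(2*w+1)) / (w+2) + 1

section OddTriangular

variable {w : ℕ}

theorem residue_eq_of_modEq {y₀ z₀ y₁ z₁ : ℕ} (hy₀ : y₀ < 2*w+1) (hy₁ : y₁ < 2*w+1)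
    (hz₀ : z₀ < w+1) (hz₁ : z₁ < w+1)
    (h : (w+1)*(2*w+3)*y₀ + (w+2)*(2*w+3)*z₀ ≡ (w+1)*(2*w+3)*y₁ + (w+2)*(2*w+3)*z₁
      [MOD (w+1)*(2*w+1)]) :
    y₀ = y₁ ∧ z₀ = z₁ := by
  have hz : z₀ = z₁ := by
    have e (y z : ℕ) : (w+1)*(2*w+3)*y + (w+2)*(2*w+3)*z = z + (w+1)*((2*w+3)*y + (2*w+5)*z) := by
      ring
    have h' := h.of_mul_right (2*w+1)
    rw [e, e, Nat.add_modulus_mul_modEq_iff, Nat.ModEq.comm, Nat.add_modulus_mul_modEq_iff] at h'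
    exact h'.symm.eq_of_lt_of_lt hz₀ hz₁
  subst hz
  refine ⟨?_, rfl⟩
  have h' := Nat.ModEq.add_right_cancel' _ h
  simp only [mul_assoc] at h'
  have hcop : Nat.gcd (2*w+1) (2*w+3) = 1 := by
    rw [show 2*w+3 = 2*w+1 + 2 by ring]
    simp
  exact ((Nat.ModEq.mul_left_cancel' (by omega) h').cancel_left_of_coprime hcop).eq_of_lt_of_lt
    hy₀ hy₁

theorem exists_residue_modEq (N : ℕ) : ∃ y₀ < 2*w+1, ∃ z₀ < w+1,
    (w+1)*(2*w+3)*y₀ + (w+2)*(2*w+3)*z₀ ≡ N [MOD (w+1)*(2*w+1)] := by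
  -- pigeonhole: the `(2w+1)(w+1)` reduced pairs have pairwise distinct residues modulo `A`
  obtain ⟨p, hp, hpN⟩ := Finset.surj_on_of_inj_on_of_card_le
    (s := range (2*w+1) ×ˢ range (w+1)) (t := range ((w+1)*(2*w+1)))
    (fun p _ => ((w+1)*(2*w+3)*p.1 + (w+2)*(2*w+3)*p.2) % ((w+1)*(2*w+1)))
    (fun _ _ => mem_range.2 (Nat.mod_lt _ (by positivity)))
    (fun p q hp hq hpq => by
      simp only [mem_product, mem_range] at hp hq
      obtain ⟨h1, h2⟩ := residue_eq_of_modEq hp.1 hq.1 hp.2 hq.2 hpq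
      exact Prod.ext h1 h2)
    (by simp [mul_comm])
    (N % ((w+1)*(2*w+1))) (mem_range.2 (Nat.mod_lt _ (by positivity)))
  simp only [mem_product, mem_range] at hp
  exact ⟨p.1, hp.1, p.2, hp.2, hpN.symm⟩

theorem lattice_value {y z y₀ z₀ j γ : ℕ} (hy : y + γ*(w+2) = y₀ + j*(2*w+1))
    (hz : z = z₀ + γ*(w+1)) :
    (w+1)*(2*w+3)*y + (w+2)*(2*w+3)*z =
      (w+1)*(2*w+3)*y₀ + (w+2)*(2*w+3)*z₀ + (w+1)*(2*w+1)*((2*w+3)*j) := by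
  subst hz
  zify at hy ⊢
  linear_combination ((w:ℤ)+1)*(2*w+3) * hy

theorem exists_lattice_coords {y z y₀ z₀ : ℕ} (hy₀ : y₀ < 2*w+1) (hz₀ : z₀ < w+1)
    (h : (w+1)*(2*w+3)*y + (w+2)*(2*w+3)*z ≡ (w+1)*(2*w+3)*y₀ + (w+2)*(2*w+3)*z₀
      [MOD (w+1)*(2*w+1)]) :
    ∃ j γ, y + γ*(w+2) = y₀ + j*(2*w+1) ∧ z = z₀ + γ*(w+1) := by
  set γ := z / (w+1)
  set u := y + γ*(w+2)
  have hz : z = z % (w+1) + γ*(w+1) := (Nat.mod_add_div' z (w+1)).symm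
  have hu : u = u % (2*w+1) + u / (2*w+1) * (2*w+1) := (Nat.mod_add_div' u _).symm
  rw [lattice_value hu hz, Nat.add_modulus_mul_modEq_iff] at h
  obtain ⟨rfl, rfl⟩ :=
    residue_eq_of_modEq (Nat.mod_lt _ (by omega)) hy₀ (Nat.mod_lt _ (by omega)) hz₀ h
  exact ⟨u / (2*w+1), γ, hu, hz⟩

theorem repCount_eq_sum_layerSize {y₀ z₀ N : ℕ} (hy₀ : y₀ < 2*w+1) (hz₀ : z₀ < w+1)
    (hN : (w+1)*(2*w+3)*y₀ + (w+2)*(2*w+3)*z₀ ≡ N [MOD (w+1)*(2*w+1)]) :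
    repCount (oddTriWeights w) N = ∑ j ∈ range (N+1) with
      (w+1)*(2*w+3)*y₀ + (w+2)*(2*w+3)*z₀ + (w+1)*(2*w+1)*((2*w+3)*j) ≤ N,
      layerSize w y₀ j := by
  have le_A (j : ℕ) : j ≤ (w+1)*(2*w+1)*((2*w+3)*j) :=
    (Nat.le_mul_of_pos_left j (by omega)).trans (Nat.le_mul_of_pos_left _ (by positivity))
  have le_B (y : ℕ) : y ≤ (w+1)*(2*w+3)*y := Nat.le_mul_of_pos_left y (by positivity)
  have le_C (z : ℕ) : z ≤ (w+2)*(2*w+3)*z := Nat.le_mul_of_pos_left z (by positivity)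
  rw [oddTriWeights, repCount_three_eq_card _ _ _ _ (by positivity)]
  conv_rhs => arg 2; ext j; rw [← card_range (layerSize w y₀ j)]
  rw [← card_sigma]
  symm
  refine card_bij (fun p _ => (y₀ + p.1*(2*w+1) - p.2*(w+2), z₀ + p.2*(w+1))) ?_ ?_ ?_
  · rintro ⟨j, γ⟩ hp
    simp only [mem_sigma, mem_filter, mem_range, layerSize] at hp
    obtain ⟨⟨-, hle⟩, hγ⟩ := hp
    have hγ' : γ*(w+2) ≤ y₀ + j*(2*w+1) := (Nat.le_div_iff_mul_le (by omega)).1 (by omega)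
    have hval := lattice_value (w := w) (y₀ := y₀) (z₀ := z₀) (j := j) (γ := γ)
      (y := y₀ + j*(2*w+1) - γ*(w+2)) (by omega) rfl
    rw [← hval] at hle
    simp only [mem_filter, mem_product, mem_range]
    refine ⟨⟨?_, ?_⟩, hle, ?_⟩
    · have := le_B (y₀ + j*(2*w+1) - γ*(w+2)); omega
    · have := le_C (z₀ + γ*(w+1)); omega
    · rwa [hval, Nat.add_modulus_mul_modEq_iff]
  · rintro ⟨j, γ⟩ hp ⟨j', γ'⟩ hp' he
    simp only [mem_sigma, mem_filter, mem_range, layerSize] at hp hp'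
    simp only [Prod.mk.injEq] at he
    have hγ : γ = γ' := Nat.eq_of_mul_eq_mul_right (by omega : 0 < w+1) (by omega)
    subst hγ
    have hγ₁ : γ*(w+2) ≤ y₀ + j*(2*w+1) := (Nat.le_div_iff_mul_le (by omega)).1 (by omega)
    have hγ₂ : γ*(w+2) ≤ y₀ + j'*(2*w+1) := (Nat.le_div_iff_mul_le (by omega)).1 (by omega)
    have hj : j = j' := Nat.eq_of_mul_eq_mul_right (by omega : 0 < 2*w+1) (by omega)
    subst hj
    rfl
  · rintro ⟨y, z⟩ hp
    simp only [mem_filter, mem_product, mem_range] at hp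
    obtain ⟨-, hle, hmod⟩ := hp
    obtain ⟨j, γ, hy, hz⟩ := exists_lattice_coords hy₀ hz₀ (hmod.trans hN.symm)
    have hval := lattice_value hy hz
    refine ⟨⟨j, γ⟩, ?_, ?_⟩
    · simp only [mem_sigma, mem_filter, mem_range, layerSize]
      refine ⟨⟨by have := le_A j; omega, by omega⟩, ?_⟩
      exact Nat.lt_succ_of_le ((Nat.le_div_iff_mul_le (by omega)).2 (by omega))
    · simp only [Prod.mk.injEq]
      omega

theorem repCount_le_sum_layerSize {y₀ β N : ℕ} (hy₀ : y₀ < 2*w+1)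
    (hN : N + (w+1)*(2*w+1) = (w+1)*(2*w+3)*(y₀ + β*(2*w+1)) + (w+2)*(2*w+3)*w) :
    repCount (oddTriWeights w) N ≤ ∑ j ∈ range β, layerSize w y₀ j := by
  have hval : (w+1)*(2*w+3)*(y₀ + β*(2*w+1)) + (w+2)*(2*w+3)*w =
      (w+1)*(2*w+3)*y₀ + (w+2)*(2*w+3)*w + (w+1)*(2*w+1)*((2*w+3)*β) := by ring
  have hmod : (w+1)*(2*w+3)*y₀ + (w+2)*(2*w+3)*w ≡ N [MOD (w+1)*(2*w+1)] := by
    have : N + (w+1)*(2*w+1)*1 ≡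
        (w+1)*(2*w+3)*y₀ + (w+2)*(2*w+3)*w + (w+1)*(2*w+1)*((2*w+3)*β) [MOD (w+1)*(2*w+1)] := by
      rw [mul_one, hN, hval]
    rwa [Nat.add_modulus_mul_modEq_iff, Nat.ModEq.comm, Nat.add_modulus_mul_modEq_iff] at this
  rw [repCount_eq_sum_layerSize hy₀ (by omega) hmod]
  refine sum_le_sum_of_subset fun j hj => ?_
  simp only [mem_filter, mem_range] at hj ⊢
  by_contra! hβj
  have hA : 0 < (w+1)*(2*w+1) := by positivity
  have := Nat.mul_le_mul_left ((w+1)*(2*w+1)) (Nat.mul_le_mul_left (2*w+3) hβj)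
  omega

theorem sum_layerSize_le_repCount {y₀ z₀ β N : ℕ} (hy₀ : y₀ < 2*w+1) (hz₀ : z₀ < w+1)
    (hN : (w+1)*(2*w+3)*y₀ + (w+2)*(2*w+3)*z₀ ≡ N [MOD (w+1)*(2*w+1)])
    (hlt : (w+1)*(2*w+3)*(y₀ + β*(2*w+1)) + (w+2)*(2*w+3)*z₀ < N + (w+1)*(2*w+1)) :
    ∑ j ∈ range (β+1), layerSize w y₀ j ≤ repCount (oddTriWeights w) N := by
  rw [repCount_eq_sum_layerSize hy₀ hz₀ hN]
  refine sum_le_sum_of_subset fun j hj => ?_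
  simp only [mem_filter, mem_range] at hj ⊢
  have hval : (w+1)*(2*w+3)*(y₀ + β*(2*w+1)) + (w+2)*(2*w+3)*z₀ =
      (w+1)*(2*w+3)*y₀ + (w+2)*(2*w+3)*z₀ + (w+1)*(2*w+1)*((2*w+3)*β) := by ring
  have hjβ := Nat.mul_le_mul_left ((w+1)*(2*w+1)) (Nat.mul_le_mul_left (2*w+3) (Nat.le_of_lt_succ hj))
  have hle := (Nat.add_modulus_mul_modEq_iff (b := (2*w+3)*j)).2 hN |>.le_of_lt_add (by omega)
  have hjA : j ≤ (w+1)*(2*w+1)*((2*w+3)*j) :=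
    (Nat.le_mul_of_pos_left j (by omega)).trans (Nat.le_mul_of_pos_left _ (by positivity))
  exact ⟨by omega, hle⟩

theorem genFrob_oddTriWeights_eq {s y₀ β M : ℕ} (hy₀ : y₀ < 2*w+1) (hM : y₀ + β*(2*w+1) = M)
    (hcand : ∑ j ∈ range β, layerSize w y₀ j ≤ s)
    (hcover : ∀ y < 2*w+1, ∃ β', y + β'*(2*w+1) ≤ M ∧ s < ∑ j ∈ range (β'+1), layerSize w y j) :
    genFrob (oddTriWeights w) s = (w+1)*(2*w+3)*(M : ℤ) + (w+2)*(2*w+3)*w - (w+1)*(2*w+1) := by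
  subst hM
  set m₀ : ℤ := (w+1)*(2*w+3)*((y₀ + β*(2*w+1) : ℕ) : ℤ) + (w+2)*(2*w+3)*w - (w+1)*(2*w+1)
    with hm₀_def
  -- then every `m > m₀` is a natural number, whose `repCountZ` is a genuine `repCount`
  have hm₀ : -1 ≤ m₀ := by
    have : (0 : ℤ) ≤ (w+1)*(2*w+3)*((y₀ + β*(2*w+1) : ℕ) : ℤ) := by positivity
    have : (0 : ℤ) ≤ w*(2*w^2+5*w+3) := by positivity
    linarith
  refine IsGreatest.csSup_eq ⟨?_, fun m hm => ?_⟩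
  · show repCountZ _ m₀ ≤ s
    unfold repCountZ
    split_ifs with h
    · refine (repCount_le_sum_layerSize hy₀ ?_).trans hcand
      zify
      rw [Int.toNat_of_nonneg h, hm₀_def]
      push_cast
      ring
    · exact Nat.zero_le s
  · by_contra! hlt
    have hm0 : 0 ≤ m := by omega
    obtain ⟨y, hy, z, hz, hmod⟩ := exists_residue_modEq (w := w) m.toNat
    obtain ⟨β', hβ', hs⟩ := hcover y hy
    have hle : (w+1)*(2*w+3)*(y + β'*(2*w+1)) + (w+2)*(2*w+3)*z < m.toNat + (w+1)*(2*w+1) := by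
      have h1 := Nat.mul_le_mul_left ((w+1)*(2*w+3)) hβ'
      have h2 := Nat.mul_le_mul_left ((w+2)*(2*w+3)) (Nat.le_of_lt_succ hz)
      zify at h1 h2 ⊢
      rw [Int.toNat_of_nonneg hm0]
      rw [hm₀_def] at hlt
      push_cast at hlt
      linarith
    have := sum_layerSize_le_repCount hy hz hmod hle
    change repCountZ _ m ≤ s at hm
    rw [repCountZ, if_pos hm0] at hm
    omega

section LayerSize
variable {y₀ : ℕ}

theorem le_layerSize_iff {j c : ℕ} :
    c ≤ layerSize w y₀ j ↔ c*(w+2) ≤ y₀ + j*(2*w+1) + (w+2) := by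
  unfold layerSize
  rcases c with _ | c
  · simp
  · rw [Nat.add_le_add_iff_right, Nat.le_div_iff_mul_le (by omega), add_mul, one_mul,
      Nat.add_le_add_iff_right]

theorem layerSize_le_iff {j c : ℕ} : layerSize w y₀ j ≤ c ↔ y₀ + j*(2*w+1) < c*(w+2) := by
  rw [layerSize, Nat.add_one_le_iff, Nat.div_lt_iff_lt_mul (by omega)]

theorem sum_layerSize_le_sq (hy₀ : y₀ < w+2) (k : ℕ) : ∑ j ∈ range k, layerSize w y₀ j ≤ k^2 := by
  rw [← sum_range_two_mul_add_one]
  exact sum_le_sum fun j _ => layerSize_le_iff.2 (by nlinarith)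

theorem sum_layerSize_lt_sq {k : ℕ} (hy₀ : y₀ < w+2) (hk : y₀ + 3 < 3*k) :
    ∑ j ∈ range k, layerSize w y₀ j < k^2 := by
  obtain ⟨k, rfl⟩ : ∃ k', k = k' + 1 := ⟨k - 1, by omega⟩
  rw [← sum_range_two_mul_add_one]
  refine sum_lt_sum (fun j _ => layerSize_le_iff.2 (by nlinarith)) ⟨k, self_mem_range_succ k, ?_⟩
  exact Nat.lt_succ_of_le (layerSize_le_iff.2 (by nlinarith))

theorem sq_le_sum_layerSize {k : ℕ} (hk : 3*k ≤ y₀ + 3) : k^2 ≤ ∑ j ∈ range k, layerSize w y₀ j := by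
  rw [← sum_range_two_mul_add_one]
  refine sum_le_sum fun j hj => le_layerSize_iff.2 ?_
  have := mem_range.1 hj
  nlinarith

theorem sq_lt_sum_layerSize {k : ℕ} (hk₀ : 0 < k) (hk : 3*k ≤ y₀ + 3) (hy₀ : w+2 ≤ y₀) :
    k^2 < ∑ j ∈ range k, layerSize w y₀ j := by
  rw [← sum_range_two_mul_add_one]
  refine sum_lt_sum (fun j hj => le_layerSize_iff.2 ?_) ⟨0, mem_range.2 hk₀, ?_⟩
  · have := mem_range.1 hj
    nlinarith
  · exact le_layerSize_iff.2 (by nlinarith)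

theorem sq_lt_sum_layerSize_succ {k : ℕ} (hk : 3*k ≤ y₀ + 2*w + 4) :
    k^2 < ∑ j ∈ range (k+1), layerSize w y₀ j := by
  rw [sum_range_succ', ← sum_range_two_mul_add_one]
  have hshift : ∑ j ∈ range k, (2*j+1) ≤ ∑ j ∈ range k, layerSize w y₀ (j+1) := by
    refine sum_le_sum fun j hj => le_layerSize_iff.2 ?_
    have := mem_range.1 hj
    nlinarith
  have : 0 < layerSize w y₀ 0 := Nat.succ_pos _
  omega

end LayerSize

theorem genFrob_oddTriWeights_sq {k : ℕ} (hw : 0 < w) (hk : 0 < k) (hkw : 3*k ≤ w+4) :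
    genFrob (oddTriWeights w) (k^2) =
      (w+1)*(2*w+3)*((w+1) + k*(2*w+1) : ℤ) + (w+2)*(2*w+3)*w - (w+1)*(2*w+1) := by
  obtain ⟨k, rfl⟩ : ∃ k', k = k' + 1 := ⟨k - 1, by omega⟩
  have hcover : ∀ y < 2*w+1, ∃ β', y + β'*(2*w+1) ≤ (w+1) + (k+1)*(2*w+1) ∧
      (k+1)^2 < ∑ j ∈ range (β'+1), layerSize w y j := by
    intro y hy
    by_cases hyw : w + 2 ≤ y
    · exact ⟨k, by nlinarith, sq_lt_sum_layerSize (by omega) (by omega) hyw⟩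
    · exact ⟨k+1, by nlinarith, sq_lt_sum_layerSize_succ (by omega)⟩
  rw [genFrob_oddTriWeights_eq (by omega) rfl (sum_layerSize_le_sq (by omega) _) hcover]
  push_cast
  ring

theorem genFrob_oddTriWeights_of_succ_eq_sq {s k : ℕ} (hs : s + 1 = k^2) (hk : 0 < k)
    (hkw : 3*k ≤ w+4) :
    genFrob (oddTriWeights w) s =
      (w+1)*(2*w+3)*(2*k*(w+2) - 4 : ℤ) + (w+2)*(2*w+3)*w - (w+1)*(2*w+1) := by
  obtain ⟨k, rfl⟩ : ∃ k', k = k' + 1 := ⟨k - 1, by omega⟩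
  have hcover : ∀ y < 2*w+1, ∃ β', y + β'*(2*w+1) ≤ 2*w + 3*k + k*(2*w+1) ∧
      s < ∑ j ∈ range (β'+1), layerSize w y j := by
    intro y hy
    by_cases hyk : 3*k ≤ y
    · have := sq_le_sum_layerSize (w := w) (k := k+1) (y₀ := y) (by omega)
      exact ⟨k, by nlinarith, by omega⟩
    · have := sq_lt_sum_layerSize_succ (w := w) (k := k+1) (y₀ := y) (by omega)
      exact ⟨k+1, by nlinarith, by omega⟩
  rcases k with _ | k
  · rw [genFrob_oddTriWeights_eq (y₀ := 2*w) (β := 0) (by omega) (by ring) (by simp) hcover]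
    push_cast
    ring
  · have := sum_layerSize_lt_sq (w := w) (y₀ := 3*k+2) (k := k+1+1) (by omega) (by omega)
    rw [genFrob_oddTriWeights_eq (y₀ := 3*k+2) (β := k+1+1) (by omega) (by ring) (by omega) hcover]
    push_cast
    ring

end OddTriangular

theorem triangular_odd_eq (w : ℕ) :
    ![t (2*w+1), t (2*w+1+1), t (2*w+1+2)] = oddTriWeights w := by
  have ht (m p : ℕ) (hm : m * (m+1) = 2 * p) : t m = p := by
    rw [t, hm, Nat.mul_div_cancel_left _ two_pos]
  rw [oddTriWeights, ht (2*w+1) ((w+1)*(2*w+1)) (by ring), ht (2*w+1+1) ((w+1)*(2*w+3)) (by ring),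
    ht (2*w+1+2) ((w+2)*(2*w+3)) (by ring)]

theorem pos_and_three_mul_le_of_NOdd_lt {w k : ℕ} (hk : 0 < k)
    (h : ((2*w+1 : ℕ) : ℤ) > NOdd (k^2)) : 0 < w ∧ 3*k ≤ w+4 := by
  unfold NOdd at h
  obtain rfl | hk2 := (Nat.one_le_iff_ne_zero.2 hk.ne').eq_or_lt
  · have : Nat.sqrt 9 = 3 := Nat.sqrt_eq' 3
    norm_num [this] at h
    omega
  · have hsqrt : 2*k ≤ Nat.sqrt (4*k^2 + 5) := Nat.le_sqrt.2 (by nlinarith)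
    omega

/-- for odd `n > N_{s+1}^odd`, if `s+1 = k²` with `k ≥ 1`, then
`g(…; s+1) - g(…; s) = (n - 6k + 9)(n+1)(n+2)/4`. -/
theorem stmt_4 (s n k : ℕ) (hn : Odd n) (hbound : (n : ℤ) > NOdd (s + 1))
    (hk : 1 ≤ k) (hsk : s + 1 = k ^ 2) :
    genFrob ![t n, t (n + 1), t (n + 2)] (s + 1) - genFrob ![t n, t (n + 1), t (n + 2)] s =
      ((n : ℤ) - 6 * k + 9) * ((n : ℤ) + 1) * ((n : ℤ) + 2) / 4 := by
  obtain ⟨w, rfl⟩ := hn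
  rw [hsk] at hbound
  obtain ⟨hw, hkw⟩ := pos_and_three_mul_le_of_NOdd_lt hk hbound
  rw [triangular_odd_eq, genFrob_oddTriWeights_of_succ_eq_sq hsk hk hkw, hsk,
    genFrob_oddTriWeights_sq hw hk hkw]
  have hnum : (((2*w+1 : ℕ) : ℤ) - 6*k + 9) * (((2*w+1 : ℕ) : ℤ) + 1) * (((2*w+1 : ℕ) : ℤ) + 2) =
      4 * ((w+1)*(2*w+3)*(w+5-3*k)) := by
    push_cast
    ring
  rw [hnum, Int.mul_ediv_cancel_left _ four_ne_zero]
  ring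
end

section
/- Let s ≥ 0 and let n be an odd integer with n > N_{s+1}^odd. If s + 1 = k(k+1) for some integer k ≥ 1, then g(t_n, t_{n+1}, t_{n+2}; s+1) − g(t_n, t_{n+1}, t_{n+2}; s) = (n − 6k + 3)(n+1)(n+2)/4. -/
open Finset

/-!
Write `n = 2h + 1`, so that the generators are `A = (2h+1)(h+1)`, `B = (h+1)(2h+3)` and
`C = (h+2)(2h+3)`. A representation `Ax + By + Cz = m` is determined by the pair `(y, z)`,
subject to `By + Cz ≤ m` and `By + Cz ≡ m (mod A)`. Every residue mod `A` is `By₀ + Cz₀` with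
`y₀ ≤ 2h`, `z₀ ≤ h`, and the pairs in that class are `z = z₀ + (h+1)w`,
`y + (h+2)w = y₀ + j(2h+1)`, of value `By₀ + Cz₀ + j(2h+3)A`. So `m` has
`∑_{j<K} (⌊(y₀ + j(2h+1))/(h+2)⌋ + 1)` representations, where `K` counts the `j` whose value is
at most `m`. Past the threshold on `n`, the `j`-th term is `2j + 2` for the classes that matter,
so `g(s + 1)` and `g(s)` lie `A` below the value with `j = k` in the classes `(2h, h)` and
`(h + 3k - 2, h)` respectively, and they differ by `B (h + 2 - 3k)`.
-/

theorem genFrob_eq_of_lt {k : ℕ} (a : Fin k → ℕ) (S G : ℕ) (hG : repCount a G ≤ S)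
    (hlt : ∀ m, G < m → S < repCount a m) : genFrob a S = G := by
  refine IsGreatest.csSup_eq ⟨by simpa [repCountZ] using hG, fun x hx => ?_⟩
  by_contra! hGx
  lift x to ℕ using (Int.natCast_nonneg G).trans hGx.le
  have := hlt x (by exact_mod_cast hGx)
  simp only [Set.mem_ofPred_eq, repCountZ, Int.natCast_nonneg, if_true, Int.toNat_natCast] at hx
  omega

def reps (a b c m : ℕ) : Finset (ℕ × ℕ) :=
  (range (m + 1) ×ˢ range (m + 1)).filter fun p =>
    b * p.1 + c * p.2 ≤ m ∧ b * p.1 + c * p.2 ≡ m [MOD a]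

theorem repCount_eq_card_reps {a : ℕ} (ha : 0 < a) (b c m : ℕ) :
    repCount ![a, b, c] m = (reps a b c m).card := by
  have hsum (x : Fin 3 → Fin (m + 1)) :
      ∑ i, ![a, b, c] i * (x i : ℕ) = a * x 0 + b * x 1 + c * x 2 := by
    simp [Fin.sum_univ_three]
  refine card_nbij' (fun x => ((x 1 : ℕ), (x 2 : ℕ)))
    (fun p => ![Fin.ofNat _ ((m - (b * p.1 + c * p.2)) / a), Fin.ofNat _ p.1, Fin.ofNat _ p.2])
    (fun x hx => ?_) (fun p hx => ?_) (fun x hx => ?_) (fun p hx => ?_) <;>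
    simp only [reps, coe_filter, mem_univ, true_and, mem_product, mem_range, Set.mem_ofPred_eq,
      hsum] at hx ⊢
  · have hV : b * x 1 + c * x 2 ≤ m := by omega
    exact ⟨⟨(x 1).is_lt, (x 2).is_lt⟩, hV, (Nat.modEq_iff_dvd' hV).mpr ⟨x 0, by omega⟩⟩
  · obtain ⟨⟨hp₁, hp₂⟩, hV, hmod⟩ := hx
    obtain ⟨q, hq⟩ := (Nat.modEq_iff_dvd' hV).mp hmod
    have hqm : q < m + 1 := Nat.lt_succ_of_le ((Nat.le_mul_of_pos_left q ha).trans (by omega))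
    simp only [Matrix.cons_val, Fin.val_ofNat, hq, Nat.mul_div_cancel_left _ ha,
      Nat.mod_eq_of_lt hqm, Nat.mod_eq_of_lt hp₁, Nat.mod_eq_of_lt hp₂]
    omega
  · ext i
    fin_cases i <;>
      simp [show m - (b * x 1 + c * x 2) = a * x 0 by omega, Nat.mul_div_cancel_left _ ha]
  · simp [Nat.mod_eq_of_lt hx.1.1, Nat.mod_eq_of_lt hx.1.2]

theorem exists_forall_add_mul_le_iff_lt (V m : ℕ) {L : ℕ} (hL : 0 < L) :
    ∃ K, ∀ j, V + j * L ≤ m ↔ j < K :=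
  ⟨(m + L - V) / L, fun j => by
    rw [Nat.lt_iff_add_one_le, Nat.le_div_iff_mul_le hL, add_mul, one_mul]
    omega⟩

namespace OddTriple

def A (h : ℕ) : ℕ := (2 * h + 1) * (h + 1)
def B (h : ℕ) : ℕ := (h + 1) * (2 * h + 3)
def C (h : ℕ) : ℕ := (h + 2) * (2 * h + 3)
def period (h : ℕ) : ℕ := (2 * h + 3) * A h

theorem triangular_eq (h : ℕ) :
    ![t (2 * h + 1), t (2 * h + 1 + 1), t (2 * h + 1 + 2)] = ![A h, B h, C h] := by
  have key (x y : ℕ) (hxy : x * (x + 1) = y * 2) : t x = y := by simp [t, hxy]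
  simp only [key (2 * h + 1) (A h) (by simp only [A]; ring),
    key (2 * h + 1 + 1) (B h) (by simp only [B]; ring),
    key (2 * h + 1 + 2) (C h) (by simp only [C]; ring)]

theorem A_pos (h : ℕ) : 0 < A h := by unfold A; positivity
theorem A_lt_B (h : ℕ) : A h < B h := by unfold A B; nlinarith
theorem A_lt_C (h : ℕ) : A h < C h := by unfold A C; nlinarith

theorem exists_modEq (h m : ℕ) :
    ∃ y₀ ≤ 2 * h, ∃ z₀ ≤ h, B h * y₀ + C h * z₀ ≡ m [MOD A h] := by
  -- modulo `h + 1` the form is `z₀`, modulo `2h + 1` it is `y₀ + 3z₀`, and `-3 ≡ 6h`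
  set z₀ := m % (h + 1)
  set y₀ := (m + 6 * h * z₀) % (2 * h + 1)
  refine ⟨y₀, by have := Nat.mod_lt (m + 6 * h * z₀) (by omega : 2 * h + 1 > 0); omega,
    z₀, by have := Nat.mod_lt m (by omega : h + 1 > 0); omega, ?_⟩
  have hcop : Nat.Coprime (2 * h + 1) (h + 1) :=
    Nat.isCoprime_iff_coprime.mp ⟨-1, 2, by push_cast; ring⟩
  rw [A, ← Nat.modEq_and_modEq_iff_modEq_mul hcop]
  constructor
  · calc B h * y₀ + C h * z₀
          = y₀ + 3 * z₀ + (2 * h + 1) * ((h + 2) * y₀ + (h + 3) * z₀) := by simp only [B, C]; ring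
      _ ≡ y₀ + 3 * z₀ [MOD 2 * h + 1] := Nat.add_mul_mod_self_left _ _ _
      _ ≡ m + 6 * h * z₀ + 3 * z₀ [MOD 2 * h + 1] := (Nat.mod_modEq _ _).add_right _
      _ = m + (2 * h + 1) * (3 * z₀) := by ring
      _ ≡ m [MOD 2 * h + 1] := Nat.add_mul_mod_self_left _ _ _
  · calc B h * y₀ + C h * z₀ = z₀ + (h + 1) * ((2 * h + 3) * y₀ + (2 * h + 5) * z₀) := by
          simp only [B, C]; ring
      _ ≡ z₀ [MOD h + 1] := Nat.add_mul_mod_self_left _ _ _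
      _ ≡ m [MOD h + 1] := Nat.mod_modEq _ _

theorem exists_eq_of_modEq {h y z y₀ z₀ : ℕ} (hy₀ : y₀ ≤ 2 * h) (hz₀ : z₀ ≤ h)
    (hmod : B h * y + C h * z ≡ B h * y₀ + C h * z₀ [MOD A h]) :
    ∃ w j, z = z₀ + (h + 1) * w ∧ y + (h + 2) * w = y₀ + j * (2 * h + 1) := by
  -- modulo `h + 1` the congruence reads `z ≡ z₀`; then modulo `2h + 1` it reads
  -- `(2h + 3)(y + (h + 2)w - y₀) ≡ 0`
  obtain ⟨e, he⟩ := Nat.modEq_iff_dvd.mp hmod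
  simp only [A, B, C] at he
  push_cast at he
  obtain ⟨w, hw⟩ : ((h : ℤ) + 1) ∣ z - z₀ :=
    ⟨(2 * h + 3) * (y₀ - y) + (2 * h + 5) * (z₀ - z) - (2 * h + 1) * e,
      by linear_combination -he⟩
  have hw0 : 0 ≤ w := by
    have : ((h : ℤ) + 1) * (-1) < (h + 1) * w := by linarith
    have := lt_of_mul_lt_mul_left this (by positivity)
    omega
  lift w to ℕ using hw0
  have hcop : IsCoprime (2 * (h : ℤ) + 1) (2 * h + 3) := ⟨h + 1, -h, by ring⟩
  have hw' : ((h : ℤ) + 1) * ((2 * h + 3) * (y + (h + 2) * w - y₀)) =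
      (h + 1) * ((2 * h + 1) * -e) := by
    linear_combination -he - (h + 2) * (2 * h + 3) * hw
  obtain ⟨j, hj⟩ : (2 * (h : ℤ) + 1) ∣ y + (h + 2) * w - y₀ :=
    hcop.dvd_of_dvd_mul_left ⟨-e, mul_left_cancel₀ (by positivity) hw'⟩
  have hj0 : 0 ≤ j := by
    have : (2 * (h : ℤ) + 1) * (-1) < (2 * h + 1) * j := by nlinarith
    have := lt_of_mul_lt_mul_left this (by positivity)
    omega
  lift j to ℕ using hj0
  exact ⟨w, j, by linarith, by linarith⟩

theorem B_mul_add_C_mul_eq {h y w y₀ z₀ j : ℕ}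
    (hyw : y + (h + 2) * w = y₀ + j * (2 * h + 1)) :
    B h * y + C h * (z₀ + (h + 1) * w) = B h * y₀ + C h * z₀ + j * period h := by
  simp only [A, B, C, period]
  linear_combination ((h + 1) * (2 * h + 3)) * hyw

theorem add_mul_period_modEq (h V j : ℕ) : V + j * period h ≡ V [MOD A h] := by
  rw [period, show j * ((2 * h + 3) * A h) = A h * (j * (2 * h + 3)) by ring]
  exact Nat.add_mul_mod_self_left _ _ _

def repSum (h k y : ℕ) : ℕ := ∑ j ∈ range k, ((y + j * (2 * h + 1)) / (h + 2) + 1)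

theorem card_reps {h m y₀ z₀ K : ℕ} (hy₀ : y₀ ≤ 2 * h) (hz₀ : z₀ ≤ h)
    (hmod : B h * y₀ + C h * z₀ ≡ m [MOD A h])
    (hK : ∀ j, B h * y₀ + C h * z₀ + j * period h ≤ m ↔ j < K) :
    (reps (A h) (B h) (C h) m).card = repSum h K y₀ := by
  have hbound (j w : ℕ) :
      w < (y₀ + j * (2 * h + 1)) / (h + 2) + 1 ↔ (h + 2) * w ≤ y₀ + j * (2 * h + 1) := by
    rw [Nat.lt_succ_iff, Nat.le_div_iff_mul_le (by omega), mul_comm]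
  have hrange : reps (A h) (B h) (C h) m =
      ((range K).sigma fun j => range ((y₀ + j * (2 * h + 1)) / (h + 2) + 1)).image
        fun q => (y₀ + q.1 * (2 * h + 1) - (h + 2) * q.2, z₀ + (h + 1) * q.2) := by
    ext ⟨y, z⟩
    simp only [reps, mem_filter, mem_product, mem_range, mem_image, mem_sigma, Sigma.exists,
      Prod.mk.injEq]
    constructor
    · rintro ⟨-, hle, hyz⟩
      obtain ⟨w, j, rfl, hyw⟩ := exists_eq_of_modEq hy₀ hz₀ (hyz.trans hmod.symm)
      rw [B_mul_add_C_mul_eq hyw, hK] at hle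
      exact ⟨j, w, ⟨hle, (hbound j w).mpr (by omega)⟩, by omega, rfl⟩
    · rintro ⟨j, w, ⟨hj, hw⟩, rfl, rfl⟩
      have hval := B_mul_add_C_mul_eq (z₀ := z₀) (Nat.sub_add_cancel ((hbound j w).mp hw))
      have hle := (hK j).mpr hj
      have hmod' := (add_mul_period_modEq h _ j).trans hmod
      have hB : 0 < B h := by unfold B; positivity
      have hC : 0 < C h := by unfold C; positivity
      generalize y₀ + j * (2 * h + 1) - (h + 2) * w = y at hval ⊢
      refine ⟨⟨?_, ?_⟩, hval ▸ hle, hval ▸ hmod'⟩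
      · linarith [Nat.le_mul_of_pos_left y hB, Nat.zero_le (C h * (z₀ + (h + 1) * w))]
      · linarith [Nat.le_mul_of_pos_left (z₀ + (h + 1) * w) hC, Nat.zero_le (B h * y)]
  rw [hrange, card_image_of_injOn, card_sigma]
  · simp only [card_range, repSum]
  rintro ⟨j, w⟩ hq ⟨j', w'⟩ hq' heq
  simp only [coe_sigma, Set.mem_sigma_iff, coe_range, Set.mem_Iio] at hq hq'
  obtain ⟨hy, hz⟩ := Prod.mk.inj heq
  dsimp only at hy hz
  obtain rfl : w = w' := Nat.eq_of_mul_eq_mul_left (by omega) (Nat.add_left_cancel hz)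
  have := (hbound j w).mp hq.2
  have := (hbound j' w).mp hq'.2
  obtain rfl : j = j' := Nat.eq_of_mul_eq_mul_right (by omega : 0 < 2 * h + 1) (by omega)
  rfl

/-- Comparing sizes leaves only the class `(Y, h)` itself, which the congruence excludes. -/
theorem count_eq_and_lt_of_lt {h k K m Y y₀ z₀ : ℕ} (hy₀ : y₀ ≤ 2 * h) (hz₀ : z₀ ≤ h)
    (hKk : K ≤ k) (hmod : B h * y₀ + C h * z₀ ≡ m [MOD A h])
    (hlo : B h * Y + C h * h + k * period h < m + A h)
    (hhi : m < B h * y₀ + C h * z₀ + K * period h) : K = k ∧ Y < y₀ := by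
  have hAB := A_lt_B h
  have hAC := A_lt_C h
  have hBy : B h * y₀ ≤ B h * (2 * h) := Nat.mul_le_mul_left _ hy₀
  have hCz : C h * z₀ ≤ C h * h := Nat.mul_le_mul_left _ hz₀
  have hK : K = k := by
    by_contra hne
    have : (K + 1) * period h ≤ k * period h := Nat.mul_le_mul_right _ (by omega)
    have : period h = B h * (2 * h) + B h := by simp only [period, A, B]; ring
    linarith [Nat.zero_le (B h * Y)]
  subst hK
  refine ⟨rfl, lt_of_not_ge fun hyY => ?_⟩
  obtain rfl : y₀ = Y := by
    by_contra hne
    have : B h * (y₀ + 1) ≤ B h * Y := Nat.mul_le_mul_left _ (by omega)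
    linarith
  obtain rfl : z₀ = h := by
    by_contra hne
    have : C h * (z₀ + 1) ≤ C h * h := Nat.mul_le_mul_left _ (by omega)
    linarith
  have hdvd := (Nat.modEq_iff_dvd' hhi.le).mp (hmod.symm.trans (add_mul_period_modEq _ _ K).symm)
  have := Nat.eq_zero_of_dvd_of_lt hdvd (by omega)
  omega

theorem sum_range_two_mul_add_two (k : ℕ) : ∑ j ∈ range k, (2 * j + 2) = k * (k + 1) := by
  induction k with
  | zero => rfl
  | succ k ih => rw [sum_range_succ, ih]; ring

theorem mul_succ_le_repSum {h k y : ℕ} (hy : h + 3 * k ≤ y + 1) :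
    k * (k + 1) ≤ repSum h k y := by
  rw [← sum_range_two_mul_add_two]
  refine sum_le_sum fun j hj => Nat.succ_le_succ ((Nat.le_div_iff_mul_le (by omega)).mpr ?_)
  have := mem_range.mp hj
  nlinarith

theorem repSum_le_mul_succ {h k y : ℕ} (hy : y ≤ 2 * h + 3) : repSum h k y ≤ k * (k + 1) := by
  rw [← sum_range_two_mul_add_two]
  refine sum_le_sum fun j _ => Nat.succ_le_of_lt ((Nat.div_lt_iff_lt_mul (by omega)).mpr ?_)
  nlinarith

theorem repSum_succ' (h k y : ℕ) :
    repSum h (k + 1) y = repSum h k (y + (2 * h + 1)) + (y / (h + 2) + 1) := by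
  simp only [repSum, sum_range_succ', zero_mul, add_zero]
  congr 1
  exact sum_congr rfl fun j _ => by ring_nf

theorem mul_succ_lt_repSum_succ {h k : ℕ} (hk : 3 * k ≤ h + 2) (y : ℕ) :
    k * (k + 1) < repSum h (k + 1) y := by
  rw [repSum_succ']
  exact (mul_succ_le_repSum (by omega)).trans_lt (Nat.lt_add_of_pos_right (Nat.succ_pos _))

theorem repSum_succ_eq {h k : ℕ} (hk : 3 * k ≤ h + 2) :
    repSum h (k + 1) (h + 3 * k + 1) + 1 = (k + 1) * (k + 2) := by
  have hlast : (h + 3 * k + 1 + k * (2 * h + 1)) / (h + 2) = 2 * k :=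
    Nat.div_eq_of_lt_le (by nlinarith) (by nlinarith)
  rw [repSum, sum_range_succ, ← repSum, hlast,
    le_antisymm (repSum_le_mul_succ (by omega)) (mul_succ_le_repSum (by omega))]
  ring

theorem genFrob_add_A_eq {h k S Y : ℕ} (hk : 1 ≤ k) (hY : Y ≤ 2 * h)
    (hfew : repSum h k Y ≤ S)
    (hmany : ∀ y, Y < y → y ≤ 2 * h → S < repSum h k y)
    (hmore : ∀ y ≤ 2 * h, S < repSum h (k + 1) y) :
    genFrob ![A h, B h, C h] S + A h = B h * Y + C h * h + k * period h := by
  have hA := A_pos h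
  have hAP : A h ≤ period h := Nat.le_mul_of_pos_left _ (by omega)
  have hAkP : A h ≤ k * period h := hAP.trans (Nat.le_mul_of_pos_left _ hk)
  have hP : 0 < period h := by unfold period; positivity
  rw [genFrob_eq_of_lt _ S (B h * Y + C h * h + k * period h - A h)]
  · push_cast [Nat.cast_sub (hAkP.trans (Nat.le_add_left _ _))]
    ring
  · have hmod : B h * Y + C h * h ≡ B h * Y + C h * h + k * period h - A h [MOD A h] :=
      calc B h * Y + C h * h ≡ B h * Y + C h * h + k * period h [MOD A h] :=
            (add_mul_period_modEq _ _ _).symm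
        _ = B h * Y + C h * h + k * period h - A h + A h := by omega
        _ ≡ B h * Y + C h * h + k * period h - A h [MOD A h] := Nat.add_mod_right _ _
    refine (repCount_eq_card_reps hA _ _ _).trans_le
      ((card_reps hY le_rfl hmod fun j => ?_).trans_le hfew)
    constructor
    · intro hle
      by_contra hkj
      have := Nat.mul_le_mul_right (period h) (not_lt.mp hkj)
      omega
    · intro hj
      have := Nat.mul_le_mul_right (period h) (Nat.succ_le_of_lt hj)
      rw [Nat.succ_mul] at this
      omega
  · intro m hm
    obtain ⟨y₀, hy₀, z₀, hz₀, hmod⟩ := exists_modEq h m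
    obtain ⟨K, hK⟩ := exists_forall_add_mul_le_iff_lt (B h * y₀ + C h * z₀) m hP
    rw [repCount_eq_card_reps hA, card_reps hy₀ hz₀ hmod hK]
    rcases le_or_gt K k with hKk | hkK
    · obtain ⟨rfl, hlt⟩ := count_eq_and_lt_of_lt (Y := Y) hy₀ hz₀ hKk hmod (by omega)
        (lt_of_not_ge fun hle => (hK K).mp hle |>.false)
      exact hmany y₀ hlt hy₀
    · exact (hmore y₀ hy₀).trans_le (sum_le_sum_of_subset (range_subset_range.mpr hkK))

end OddTriple

open OddTriple

theorem NOdd_mul_succ {k : ℕ} (hk : 1 ≤ k) : NOdd (k * (k + 1)) = 6 * k - 3 := by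
  have hsqrt : Nat.sqrt (4 * (k * (k + 1)) + 5) = 2 * k + 1 := by
    rw [show 4 * (k * (k + 1)) + 5 = (2 * k + 1) * (2 * k + 1) + 4 by ring]
    exact Nat.sqrt_add_eq _ (by omega)
  rw [NOdd, hsqrt, show (2 * k + 1 - 1) / 2 = k by omega]

/-- for odd `n > N_{s+1}^odd`, if `s+1 = k(k+1)` with `k ≥ 1`, then
`g(…; s+1) - g(…; s) = (n - 6k + 3)(n+1)(n+2)/4`. -/
theorem stmt_5 (s n k : ℕ) (hn : Odd n) (hbound : (n : ℤ) > NOdd (s + 1))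
    (hk : 1 ≤ k) (hsk : s + 1 = k * (k + 1)) :
    genFrob ![t n, t (n + 1), t (n + 2)] (s + 1) - genFrob ![t n, t (n + 1), t (n + 2)] s =
      ((n : ℤ) - 6 * k + 3) * ((n : ℤ) + 1) * ((n : ℤ) + 2) / 4 := by
  obtain ⟨h, rfl⟩ := hn
  rw [hsk, NOdd_mul_succ hk] at hbound
  obtain ⟨K, rfl⟩ : ∃ K, k = K + 1 := ⟨k - 1, by omega⟩
  have hK : 3 * (K + 1) ≤ h + 1 := by push_cast at hbound; omega
  have hs : s = repSum h (K + 1) (h + 3 * K + 1) := by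
    have := repSum_succ_eq (h := h) (k := K) (by omega)
    rw [← hsk] at this; omega
  have htop := genFrob_add_A_eq (S := s + 1) (Y := 2 * h) hk le_rfl
    (hsk ▸ repSum_le_mul_succ (by omega)) (fun y hy hy' => by omega)
    (fun y _ => hsk ▸ mul_succ_lt_repSum_succ (by omega) y)
  have hmid := genFrob_add_A_eq (h := h) (S := s) (Y := h + 3 * K + 1) hk (by omega) hs.ge
    (fun y hy _ => by have := mul_succ_le_repSum (h := h) (k := K + 1) (y := y) (by omega); omega)
    (fun y _ => by have := mul_succ_lt_repSum_succ (h := h) (k := K + 1) (by omega) y; omega)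
  have hquot : (((2 * h + 1 : ℕ) : ℤ) - 6 * ((K + 1 : ℕ) : ℤ) + 3) *
      (((2 * h + 1 : ℕ) : ℤ) + 1) * (((2 * h + 1 : ℕ) : ℤ) + 2) =
      4 * (B h * ((h : ℤ) - 3 * K - 1)) := by
    simp only [B]; push_cast; ring
  rw [triangular_eq, hquot, Int.mul_ediv_cancel_left _ four_ne_zero]
  push_cast at htop hmid
  linear_combination htop - hmid
end

section
/- Let s ≥ 0 be an integer. For every even integer n with n > N_s^even, the generalized Frobenius number of the three consecutive triangular numbers satisfies g(t_n, t_{n+1}, t_{n+2}; s) = ((n+1)(n+2)/4)·((2x_s^even + y_s^even + 3)n + 6x_s^even) − 1. -/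
open Finset

/-!
Write `n = 2h`. The weights `a = h(2h+1)`, `b = (h+1)(2h+1)`, `c = (h+1)(2h+3)` satisfy
`(h+1)a = hb` and `(2h+1)c = (2h+3)b`; moreover `a ≡ 1`, `b ≡ c ≡ 0 (mod h+1)` and
`a ≡ b ≡ 0`, `c ≡ 1 (mod 2h+1)`. Hence every integer is `ra + Tb + ec` with `0 ≤ r ≤ h`,
`0 ≤ e ≤ 2h`, and the representations of this number correspond to the lattice points
`(p, q) ∈ ℕ²` with `(2h+3)p + hq ≤ T`. Their number `L(T)` is monotone in `T`, so the largest
number with at most `s` representations is `ha + (W-1)b + 2hc = (W+3h)b - 1`, where `W` is the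
least `T` with `L(T) > s`.

For `h` large, `(2h+3)p + hq = h(2p+q) + 3p` with `3p < h`, so these weights order the lattice
points lexicographically by `(2p+q, p)`. The `(s+1)`-st point is `(x_s, y_s)`, whence
`W = (2h+3)x_s + h y_s`.
-/

namespace TriangularFrobenius

lemma t_two_mul (h : ℕ) : t (2 * h) = h * (2 * h + 1) := by
  rw [t, show 2 * h * (2 * h + 1) = 2 * (h * (2 * h + 1)) by ring]
  exact Nat.mul_div_cancel_left _ two_pos

lemma t_two_mul_add_one (h : ℕ) : t (2 * h + 1) = (h + 1) * (2 * h + 1) := by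
  rw [t, show (2 * h + 1) * (2 * h + 1 + 1) = 2 * ((h + 1) * (2 * h + 1)) by ring]
  exact Nat.mul_div_cancel_left _ two_pos

lemma t_two_mul_add_two (h : ℕ) : t (2 * h + 2) = (h + 1) * (2 * h + 3) := by
  rw [t, show (2 * h + 2) * (2 * h + 2 + 1) = 2 * ((h + 1) * (2 * h + 3)) by ring]
  exact Nat.mul_div_cancel_left _ two_pos

lemma repCount_fin_three (a₁ a₂ a₃ N : ℕ) :
    repCount ![a₁, a₂, a₃] N =
      #{x ∈ range (N + 1) ×ˢ range (N + 1) ×ˢ range (N + 1) |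
        a₁ * x.1 + a₂ * x.2.1 + a₃ * x.2.2 = N} := by
  refine card_nbij' (fun x => ((x 0 : ℕ), (x 1 : ℕ), (x 2 : ℕ)))
    (fun x => ![Fin.ofNat (N + 1) x.1, Fin.ofNat (N + 1) x.2.1, Fin.ofNat (N + 1) x.2.2])
    ?_ ?_ ?_ ?_
  · intro x hx
    simp only [coe_filter, mem_univ, true_and, Set.mem_ofPred_eq, Fin.sum_univ_three] at hx
    simpa [Fin.is_le] using hx
  · rintro ⟨x₁, x₂, x₃⟩ hx
    simp only [coe_filter, mem_product, mem_range, Set.mem_ofPred_eq] at hx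
    simp [Fin.sum_univ_three, Nat.mod_eq_of_lt, hx]
  · intro x _
    ext j
    fin_cases j <;> simp
  · rintro ⟨x₁, x₂, x₃⟩ hx
    simp only [coe_filter, mem_product, mem_range, Set.mem_ofPred_eq] at hx
    simp [Nat.mod_eq_of_lt, hx]

lemma canonical_form_of_rep {h r e x₁ x₂ x₃ : ℕ} {T : ℤ} (hr : r ≤ h) (he : e ≤ 2 * h)
    (hx : (h * (2 * h + 1) * x₁ + (h + 1) * (2 * h + 1) * x₂ + (h + 1) * (2 * h + 3) * x₃ : ℤ) =
      h * (2 * h + 1) * r + (h + 1) * (2 * h + 1) * T + (h + 1) * (2 * h + 3) * e) :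
    x₁ % (h + 1) = r ∧ x₃ % (2 * h + 1) = e ∧
      (x₂ : ℤ) = T - (2 * h + 3) * (x₃ / (2 * h + 1) : ℕ) - h * (x₁ / (h + 1) : ℕ) := by
  have h₁ : x₁ ≡ r [MOD h + 1] := Nat.modEq_iff_dvd.mpr
    ⟨(2 * h + 1) * (x₂ - T) + (2 * h + 3) * (x₃ - e) + (2 * h - 1) * (x₁ - r), by
      push_cast; linear_combination -hx⟩
  have h₃ : x₃ ≡ e [MOD 2 * h + 1] := Nat.modEq_iff_dvd.mpr
    ⟨h * (x₁ - r) + (h + 1) * (x₂ - T) + (h + 2) * (x₃ - e), by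
      push_cast; linear_combination -hx⟩
  rw [Nat.ModEq, Nat.mod_eq_of_lt (show r < h + 1 by omega)] at h₁
  rw [Nat.ModEq, Nat.mod_eq_of_lt (show e < 2 * h + 1 by omega)] at h₃
  refine ⟨h₁, h₃, mul_left_cancel₀ (by positivity : ((h : ℤ) + 1) * (2 * h + 1) ≠ 0) ?_⟩
  have e₁ : (x₁ : ℤ) = r + (h + 1) * (x₁ / (h + 1) : ℕ) := by
    rw [← h₁]; exact_mod_cast (Nat.mod_add_div x₁ (h + 1)).symm
  have e₃ : (x₃ : ℤ) = e + (2 * h + 1) * (x₃ / (2 * h + 1) : ℕ) := by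
    rw [← h₃]; exact_mod_cast (Nat.mod_add_div x₃ (2 * h + 1)).symm
  rw [e₁, e₃] at hx
  linear_combination hx

lemma exists_canonical_form (h : ℕ) (N : ℤ) : ∃ r e : ℕ, ∃ T : ℤ, r ≤ h ∧ e ≤ 2 * h ∧
    N = h * (2 * h + 1) * r + (h + 1) * (2 * h + 1) * T + (h + 1) * (2 * h + 3) * e := by
  have hr₀ := Int.emod_nonneg N (by omega : (h : ℤ) + 1 ≠ 0)
  have hr₁ := Int.emod_lt_of_pos N (by omega : (0 : ℤ) < h + 1)
  have he₀ := Int.emod_nonneg N (by omega : 2 * (h : ℤ) + 1 ≠ 0)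
  have he₁ := Int.emod_lt_of_pos N (by omega : (0 : ℤ) < 2 * h + 1)
  set r := N % (h + 1)
  set e := N % (2 * h + 1)
  have hcop : IsCoprime ((h : ℤ) + 1) (2 * h + 1) := ⟨2, -1, by ring⟩
  obtain ⟨T, hT⟩ := hcop.mul_dvd
    (⟨N / (h + 1) - (2 * h - 1) * r - (2 * h + 3) * e, by
      linear_combination (Int.emod_add_mul_ediv N (h + 1)).symm⟩ :
      (h : ℤ) + 1 ∣ N - h * (2 * h + 1) * r - (h + 1) * (2 * h + 3) * e)
    (⟨N / (2 * h + 1) - h * r - (h + 2) * e, by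
      linear_combination (Int.emod_add_mul_ediv N (2 * h + 1)).symm⟩ :
      2 * (h : ℤ) + 1 ∣ N - h * (2 * h + 1) * r - (h + 1) * (2 * h + 3) * e)
  refine ⟨r.toNat, e.toNat, T, by omega, by omega, ?_⟩
  rw [Int.toNat_of_nonneg hr₀, Int.toNat_of_nonneg he₀]
  linear_combination hT

/-- For `0 < h` the box contains every `(p, q) ∈ ℕ²` with `(2h+3)p + hq ≤ T`. -/
def triangleCount (h : ℕ) (T : ℤ) : ℕ :=
  #{pq ∈ range (T.toNat + 1) ×ˢ range (T.toNat + 1) | (2 * h + 3) * (pq.1 : ℤ) + h * pq.2 ≤ T}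

lemma coord_le_weight {h : ℕ} (hh : 0 < h) (p q : ℕ) :
    (p : ℤ) ≤ (2 * h + 3) * p + h * q ∧ (q : ℤ) ≤ (2 * h + 3) * p + h * q := by
  constructor <;> nlinarith

lemma triangleCount_mono (h : ℕ) : Monotone (triangleCount h) := by
  intro T T' hT
  refine card_le_card fun pq => ?_
  simp only [mem_filter, mem_product, mem_range]
  omega

lemma triangleCount_sub_one_lt {h : ℕ} (hh : 0 < h) (p q : ℕ) :
    triangleCount h ((2 * h + 3) * p + h * q - 1) < triangleCount h ((2 * h + 3) * p + h * q) := by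
  refine card_lt_card ((ssubset_iff_of_subset fun pq => ?_).mpr ⟨(p, q), ?_, ?_⟩)
  · simp only [mem_filter, mem_product, mem_range]
    omega
  · have := coord_le_weight hh p q
    simp only [mem_filter, mem_product, mem_range]
    omega
  · simp

lemma repCount_eq_triangleCount {h r e M : ℕ} {T : ℤ} (hh : 0 < h) (hr : r ≤ h) (he : e ≤ 2 * h)
    (hM : (M : ℤ) = h * (2 * h + 1) * r + (h + 1) * (2 * h + 1) * T + (h + 1) * (2 * h + 3) * e) :
    repCount ![h * (2 * h + 1), (h + 1) * (2 * h + 1), (h + 1) * (2 * h + 3)] M =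
      triangleCount h T := by
  have hsol : ∀ x : ℕ × ℕ × ℕ,
      h * (2 * h + 1) * x.1 + (h + 1) * (2 * h + 1) * x.2.1 + (h + 1) * (2 * h + 3) * x.2.2 = M →
      x.1 % (h + 1) = r ∧ x.2.2 % (2 * h + 1) = e ∧
        (x.2.1 : ℤ) = T - (2 * h + 3) * (x.2.2 / (2 * h + 1) : ℕ) - h * (x.1 / (h + 1) : ℕ) :=
    fun x hx => canonical_form_of_rep hr he (by rw [← hM]; exact_mod_cast hx)
  rw [repCount_fin_three, triangleCount]
  refine card_nbij' (fun x => (x.2.2 / (2 * h + 1), x.1 / (h + 1)))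
    (fun pq => (r + (h + 1) * pq.2, (T - (2 * h + 3) * pq.1 - h * pq.2).toNat,
      e + (2 * h + 1) * pq.1)) ?_ ?_ ?_ ?_
  · rintro x hx
    simp only [coe_filter, mem_product, mem_range, Set.mem_ofPred_eq] at hx ⊢
    obtain ⟨-, -, hx₂⟩ := hsol x hx.2
    have := coord_le_weight hh (x.2.2 / (2 * h + 1)) (x.1 / (h + 1))
    omega
  · rintro ⟨p, q⟩ hpq
    simp only [coe_filter, mem_product, mem_range, Set.mem_ofPred_eq] at hpq ⊢
    have hsum : h * (2 * h + 1) * (r + (h + 1) * q) +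
        (h + 1) * (2 * h + 1) * (T - (2 * h + 3) * p - h * q).toNat +
        (h + 1) * (2 * h + 3) * (e + (2 * h + 1) * p) = M := by
      zify
      rw [Int.toNat_of_nonneg (by linarith), hM]
      ring
    refine ⟨?_, hsum⟩
    have := Nat.le_mul_of_pos_left (r + (h + 1) * q) (by positivity : 0 < h * (2 * h + 1))
    have := Nat.le_mul_of_pos_left (T - (2 * h + 3) * p - h * q).toNat
      (by positivity : 0 < (h + 1) * (2 * h + 1))
    have := Nat.le_mul_of_pos_left (e + (2 * h + 1) * p) (by positivity : 0 < (h + 1) * (2 * h + 3))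
    omega
  · rintro x hx
    simp only [coe_filter, mem_product, mem_range, Set.mem_ofPred_eq] at hx
    obtain ⟨h₁, h₃, h₂⟩ := hsol x hx.2
    dsimp only
    rw [← h₂, Int.toNat_natCast, ← h₁, ← h₃, Nat.mod_add_div, Nat.mod_add_div]
  · rintro ⟨p, q⟩ -
    simp only [Prod.mk.injEq]
    constructor <;> rw [Nat.add_mul_div_left _ _ (by omega), Nat.div_eq_of_lt (by omega), zero_add]

lemma weight_le_iff {h x y p q : ℕ} (hx : 3 * x < h) (hv : 3 * (2 * x + y) ≤ 2 * h + 4) :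
    (2 * h + 3) * p + h * q ≤ (2 * h + 3) * x + h * y ↔
      q < 2 * x + y - 2 * p + if p ≤ x then 1 else 0 := by
  rw [show (2 * h + 3) * p + h * q = h * (2 * p + q) + 3 * p by ring,
    show (2 * h + 3) * x + h * y = h * (2 * x + y) + 3 * x by ring]
  rcases lt_trichotomy (2 * p + q) (2 * x + y) with hlt | heq | hgt
  · have : h * (2 * p + q) + h ≤ h * (2 * x + y) := by nlinarith
    split_ifs <;> omega
  · rw [heq]
    split_ifs <;> omega
  · have : h * (2 * x + y) + h ≤ h * (2 * p + q) := by nlinarith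
    split_ifs <;> omega

lemma sum_range_ite_le {N x : ℕ} (hx : x < N) :
    ∑ p ∈ range N, (if p ≤ x then 1 else 0) = x + 1 := by
  rw [sum_boole, Nat.cast_id, show {p ∈ range N | p ≤ x} = range (x + 1) by ext; simp; omega,
    card_range]

lemma sum_range_two_mul_sub {N k : ℕ} (hk : k ≤ N) :
    ∑ p ∈ range N, (2 * k - 2 * p) = k * (k + 1) := by
  induction k with
  | zero => simp
  | succ k ih =>
    calc ∑ p ∈ range N, (2 * (k + 1) - 2 * p)
        = ∑ p ∈ range N, ((2 * k - 2 * p) + 2 * if p ≤ k then 1 else 0) :=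
          sum_congr rfl fun p _ => by split_ifs <;> omega
      _ = (k + 1) * (k + 1 + 1) := by
          rw [sum_add_distrib, ← mul_sum, ih (by omega), sum_range_ite_le (by omega)]
          ring

lemma triangleCount_weight_eq_sum {h x y : ℕ} (hx : 3 * x < h) (hv : 3 * (2 * x + y) ≤ 2 * h + 4) :
    triangleCount h ((2 * h + 3) * x + h * y : ℕ) =
      ∑ p ∈ range (2 * x + y + 1), (2 * x + y - 2 * p + if p ≤ x then 1 else 0) := by
  have hvW : 2 * x + y ≤ (2 * h + 3) * x + h * y := by nlinarith
  rw [triangleCount, Int.toNat_natCast, card_filter, sum_product]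
  simp_rw [← card_filter]
  have hcol : ∀ p : ℕ, #{q ∈ range ((2 * h + 3) * x + h * y + 1) |
      (2 * h + 3) * (p : ℤ) + h * ((q : ℕ) : ℤ) ≤ ((2 * h + 3) * x + h * y : ℕ)} =
      2 * x + y - 2 * p + if p ≤ x then 1 else 0 := fun p => by
    rw [← card_range (2 * x + y - 2 * p + if p ≤ x then 1 else 0)]
    congr 1
    ext q
    have := weight_le_iff (p := p) (q := q) hx hv
    simp only [mem_filter, mem_range]
    constructor
    · rintro ⟨-, hq⟩; exact this.mp (by exact_mod_cast hq)
    · intro hq; exact ⟨by split_ifs at hq <;> omega, by exact_mod_cast this.mpr hq⟩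
  simp_rw [hcol]
  refine (sum_subset (range_subset_range.mpr (Nat.succ_le_succ hvW)) fun p _ hp => ?_).symm
  simp only [mem_range] at hp
  split_ifs <;> omega

lemma triangleCount_xEvenN_yEvenN {h k i : ℕ} (hi : i ≤ 2 * k + 1)
    (hh : 3 * Nat.sqrt (k * (k + 1) + i + 1) ≤ h + 2) :
    triangleCount h ((2 * h + 3) * xEvenN k i + h * yEvenN k i : ℕ) = k * (k + 1) + i + 1 := by
  have hk : k ≤ Nat.sqrt (k * (k + 1) + i + 1) := Nat.le_sqrt.mpr (by nlinarith)
  rcases le_or_gt i k with hik | hik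
  · have hx : 3 * i < h := by
      rcases hik.lt_or_eq with hik | rfl
      · omega
      · have : i + 1 ≤ Nat.sqrt (i * (i + 1) + i + 1) := Nat.le_sqrt.mpr (by nlinarith)
        omega
    rw [xEvenN, yEvenN, if_pos hik, if_pos hik, triangleCount_weight_eq_sum hx (by omega),
      show 2 * i + 2 * (k - i) = 2 * k by omega, sum_add_distrib, sum_range_two_mul_sub (by omega),
      sum_range_ite_le (by omega)]
    ring
  · have hk' : k + 1 ≤ Nat.sqrt (k * (k + 1) + i + 1) := Nat.le_sqrt.mpr (by nlinarith)
    rw [xEvenN, yEvenN, if_neg (by omega), if_neg (by omega),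
      triangleCount_weight_eq_sum (by omega) (by omega),
      show 2 * (i - k - 1) + (4 * k + 3 - 2 * i) = 2 * k + 1 by omega]
    calc ∑ p ∈ range (2 * k + 1 + 1), (2 * k + 1 - 2 * p + if p ≤ i - k - 1 then 1 else 0)
        = ∑ p ∈ range (2 * k + 2),
            ((2 * k - 2 * p + if p ≤ k then 1 else 0) + if p ≤ i - k - 1 then 1 else 0) :=
          sum_congr rfl fun p _ => by split_ifs <;> omega
      _ = k * (k + 1) + i + 1 := by
          rw [sum_add_distrib, sum_add_distrib, sum_range_two_mul_sub (by omega),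
            sum_range_ite_le (by omega), sum_range_ite_le (by omega)]
          omega

lemma genFrob_eq_of_triangleCount {h x y s : ℕ} (hh : 0 < h)
    (hs : triangleCount h ((2 * h + 3) * x + h * y : ℕ) = s + 1) :
    genFrob ![h * (2 * h + 1), (h + 1) * (2 * h + 1), (h + 1) * (2 * h + 3)] s =
      (((2 * h + 3) * x + h * y : ℕ) + 3 * h) * ((h + 1) * (2 * h + 1)) - 1 := by
  set W : ℤ := (((2 * h + 3) * x + h * y : ℕ) : ℤ)
  have hW : W = (2 * h + 3) * x + h * y := by push_cast [W]; rfl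
  have hG : (W + 3 * h) * ((h + 1) * (2 * h + 1)) - 1 =
      h * (2 * h + 1) * h + (h + 1) * (2 * h + 1) * (W - 1) + (h + 1) * (2 * h + 3) * (2 * h) := by
    ring
  have hG₀ : 0 ≤ (W + 3 * h) * ((h + 1) * (2 * h + 1)) - 1 := by
    have : (1 : ℤ) ≤ h := by exact_mod_cast hh
    have : (0 : ℤ) ≤ W := by positivity
    have : (1 : ℤ) ≤ (W + 3 * h) * ((h + 1) * (2 * h + 1)) :=
      one_le_mul_of_one_le_of_one_le (by linarith) (by nlinarith)
    linarith
  refine IsGreatest.csSup_eq ⟨?_, fun N hN => ?_⟩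
  · lift (W + 3 * h) * ((h + 1) * (2 * h + 1)) - 1 to ℕ using hG₀ with G
    simp only [Set.mem_ofPred_eq, repCountZ, Nat.cast_nonneg, if_true, Int.toNat_natCast]
    rw [repCount_eq_triangleCount hh le_rfl le_rfl hG]
    have := triangleCount_sub_one_lt hh x y
    rw [← hW] at this
    omega
  · rcases lt_or_ge N 0 with hN₀ | hN₀
    · omega
    lift N to ℕ using hN₀ with M
    obtain ⟨r, e, T, hr, he, hM⟩ := exists_canonical_form h M
    have hT : T < W := (triangleCount_mono h).reflect_lt <| by
      simp only [Set.mem_ofPred_eq, repCountZ, Nat.cast_nonneg, if_true, Int.toNat_natCast,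
        repCount_eq_triangleCount hh hr he hM] at hN
      omega
    rw [hM, hG]
    have hr' : (r : ℤ) ≤ h := by exact_mod_cast hr
    have he' : (e : ℤ) ≤ 2 * h := by exact_mod_cast he
    have := mul_le_mul_of_nonneg_left hr' (by positivity : (0 : ℤ) ≤ h * (2 * h + 1))
    have := mul_le_mul_of_nonneg_left he' (by positivity : (0 : ℤ) ≤ (h + 1) * (2 * h + 3))
    have := mul_le_mul_of_nonneg_left (Int.le_sub_one_of_lt hT)
      (by positivity : (0 : ℤ) ≤ (h + 1) * (2 * h + 1))
    linarith

end TriangularFrobenius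

open TriangularFrobenius

/-- writing `s = k(k+1) + i` with `0 ≤ i ≤ 2k+1`, for even `n > N_s^even`,
`g(t_n, t_{n+1}, t_{n+2}; s) = ((n+1)(n+2)/4)((2x_s^even + y_s^even + 3)n + 6x_s^even) - 1`. -/
theorem stmt_6 (s k i n : ℕ) (hi : i ≤ 2 * k + 1) (hs : s = k * (k + 1) + i)
    (hn : Even n) (hbound : (n : ℤ) > NEven s) :
    genFrob ![t n, t (n + 1), t (n + 2)] s =
      ((n : ℤ) + 1) * ((n : ℤ) + 2) *
        ((2 * (xEvenN k i : ℤ) + (yEvenN k i : ℤ) + 3) * (n : ℤ) + 6 * (xEvenN k i : ℤ)) / 4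
        - 1 := by
  subst hs
  obtain ⟨h, rfl⟩ := even_iff_two_dvd.mp hn
  have hsqrt : 3 * Nat.sqrt (k * (k + 1) + i + 1) ≤ h + 2 := by
    rw [NEven] at hbound; push_cast at hbound; omega
  have hh : 0 < h := by
    have := Nat.sqrt_pos.mpr (by omega : 0 < k * (k + 1) + i + 1); omega
  rw [t_two_mul, t_two_mul_add_one, t_two_mul_add_two,
    genFrob_eq_of_triangleCount hh (triangleCount_xEvenN_yEvenN hi hsqrt),
    show ((2 * h : ℕ) + 1 : ℤ) * ((2 * h : ℕ) + 2) *
        ((2 * xEvenN k i + yEvenN k i + 3) * (2 * h : ℕ) + 6 * xEvenN k i) =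
      4 * ((((2 * h + 3) * xEvenN k i + h * yEvenN k i : ℕ) + 3 * h) * ((h + 1) * (2 * h + 1)))
      by push_cast; ring,
    Int.mul_ediv_cancel_left _ four_ne_zero]
end

section
/- Let k ≥ 0 and 0 ≤ i ≤ 2k+1 be integers and set s = k(k+1) + i. For every even integer n with n > N_s^even, the number of representations of g(n+1, n+3; x_s^even) + y_s^even·t_n by the three numbers t_n, n+1, n+3 equals s, i.e. d(g(n+1, n+3; x_s^even) + y_s^even·t_n ; t_n, n+1, n+3) = s. (Here n+1 = t_{n+1}/d_1 and n+3 = t_{n+2}/d_1 where d_1 = gcd(t_{n+1}, t_{n+2}) = (n+2)/2 for even n.) -/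
open Finset

/-!
For even `n = 2m` put `a = 2m + 1` and `b = 2m + 3`, so that `t n = m a`. For coprime `a, b`
one has `g(a, b; x) = (x + 1)ab - a - b`, and the first coordinates of the representations of
`M` by `(a, b)` form a progression `u₀ + j b`, `j < R`. A representation of `M` by `(m a, a, b)`
is a representation `(u, v)` by `(a, b)` together with a splitting `u = u' + m z`, hence
`d(M; m a, a, b) = ∑_{j < R} (⌊(u₀ + j b) / m⌋ + 1)`. For `M = g(a, b; x) + y m a` one finds
`u₀ = 2m + 2 - 3y/2` (`y` even) or `u₀ = m - 1 - 3(y - 1)/2` (`y` odd), and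
`⌊(u₀ + j b) / m⌋ = 2j + ⌊(u₀ + 3j) / m⌋`. The bound `n > N_s^even` keeps every `u₀ + 3j` inside
an interval `[c m, (c + 2) m)`, so the last floor takes the value `c` before a threshold and
`c + 1` after it, and the sum evaluates to `s`.
-/

def pairReps (a b M : ℕ) : Finset ℕ :=
  (range (M + 1)).filter fun u => a * u ≤ M ∧ b ∣ M - a * u

theorem repCount_pair {a b : ℕ} (hb : 0 < b) (M : ℕ) :
    repCount ![a, b] M = #(pairReps a b M) := by
  unfold repCount pairReps
  refine card_bij (fun x _ => (x 0 : ℕ)) ?_ ?_ ?_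
  · intro x hx
    simp only [mem_filter, mem_univ, true_and, Fin.sum_univ_two, Matrix.cons_val_zero,
      Matrix.cons_val_one] at hx
    simp only [mem_filter, mem_range]
    exact ⟨(x 0).isLt, by omega, x 1, by omega⟩
  · intro x hx y hy hxy
    simp only [mem_filter, mem_univ, true_and, Fin.sum_univ_two, Matrix.cons_val_zero,
      Matrix.cons_val_one] at hx hy
    have h1 : (x 1 : ℕ) = y 1 := Nat.eq_of_mul_eq_mul_left hb (by rw [← hxy] at hy; omega)
    funext j
    fin_cases j
    exacts [Fin.ext hxy, Fin.ext h1]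
  · intro u hu
    simp only [mem_filter, mem_range] at hu
    obtain ⟨hu, hau, v, hv⟩ := hu
    have hvM : v < M + 1 := by have := Nat.le_mul_of_pos_left v hb; omega
    refine ⟨![⟨u, hu⟩, ⟨v, hvM⟩], ?_, rfl⟩
    simp only [mem_filter, mem_univ, true_and, Fin.sum_univ_two, Matrix.cons_val_zero,
      Matrix.cons_val_one, Matrix.cons_val_fin_one]
    omega

theorem add_mul_mem_pairReps {a b u v j M : ℕ} (ha : 0 < a) (h : a * u + b * v = M)
    (hj : j * a ≤ v) : u + j * b ∈ pairReps a b M := by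
  obtain ⟨w, rfl⟩ := Nat.exists_eq_add_of_le hj
  have hM : M = a * (u + j * b) + b * w := by rw [← h]; ring
  simp only [pairReps, mem_filter, mem_range]
  refine ⟨by nlinarith [Nat.le_mul_of_pos_left (u + j * b) ha], by omega, w, by omega⟩

theorem pairReps_eq_image {a b u R M : ℕ} (ha : 0 < a) (hab : a.Coprime b) (hu : u < b)
    (h : a * u + b * (R * a) = M + b) :
    pairReps a b M = (range R).image (fun j => u + j * b) := by
  ext w
  simp only [mem_image, mem_range]
  constructor
  · simp only [pairReps, mem_filter, mem_range]
    rintro ⟨-, hw, v, hv⟩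
    have hwv : (a : ℤ) * w + b * v = M := by zify [hw] at hv; linarith
    have hz : (a : ℤ) * (w - u) = b * (R * a - 1 - v) := by
      have := congrArg (fun n : ℕ => (n : ℤ)) h; push_cast at this; linarith
    obtain ⟨j, hj⟩ : (b : ℤ) ∣ w - u :=
      (Int.isCoprime_iff_gcd_eq_one.2 (by simpa using hab.symm)).dvd_of_dvd_mul_left
        ⟨_, hz⟩
    have hj0 : 0 ≤ j := by nlinarith
    lift j to ℕ using hj0
    have hwj : (w : ℤ) = u + j * b := by linarith [mul_comm (b : ℤ) j]
    refine ⟨j, ?_, by exact_mod_cast hwj.symm⟩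
    have hb : (b : ℤ) ≠ 0 := by exact_mod_cast (by omega : b ≠ 0)
    have hjR : (j : ℤ) * a + v + 1 = R * a := by
      apply mul_left_cancel₀ hb
      rw [hwj] at hwv
      have := congrArg (fun n : ℕ => (n : ℤ)) h; push_cast at this; linarith
    have : j * a < R * a := by zify; linarith
    exact lt_of_mul_lt_mul_right this (Nat.zero_le a)
  · rintro ⟨j, hj, rfl⟩
    refine add_mul_mem_pairReps (v := R * a - 1) ha ?_ ?_
    · have hR : 1 ≤ R * a := Nat.mul_pos (by omega) ha
      zify [hR] at h ⊢
      linarith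
    · have : (j + 1) * a ≤ R * a := Nat.mul_le_mul_right a hj
      rw [add_mul, one_mul] at this
      omega

theorem card_pairReps {a b u R M : ℕ} (ha : 0 < a) (hab : a.Coprime b) (hu : u < b)
    (h : a * u + b * (R * a) = M + b) : #(pairReps a b M) = R := by
  rw [pairReps_eq_image ha hab hu h, card_image_of_injective _ fun j j' hj => by
    simpa [Nat.mul_right_cancel_iff (show 0 < b by omega)] using hj, card_range]

theorem exists_mul_add_mul_eq {a b M : ℕ} (hab : a.Coprime b) (hb : 0 < b)
    (hM : a * b < M + a + b) : ∃ u < b, ∃ v, a * u + b * v = M := by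
  obtain ⟨u, hu, hmod⟩ := Nat.exists_mul_mod_eq_of_coprime M hab hb.ne'
  have hau : a * u + a ≤ a * b := by nlinarith
  have hle : a * u ≤ M := by
    by_contra! hlt
    obtain ⟨c, hc⟩ := (Nat.modEq_iff_dvd' hlt.le).1 hmod.symm
    rcases c with _ | c
    · omega
    · have : b ≤ b * (c + 1) := Nat.le_mul_of_pos_right b c.succ_pos
      omega
  obtain ⟨v, hv⟩ := (Nat.modEq_iff_dvd' hle).1 hmod
  exact ⟨u, hu, v, by omega⟩

theorem le_card_pairReps {a b x M : ℕ} (hab : a.Coprime b) (ha : 0 < a) (hb : 0 < b)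
    (hM : (x + 1) * a * b < M + a + b) : x + 1 ≤ #(pairReps a b M) := by
  obtain ⟨u, hu, v, huv⟩ := exists_mul_add_mul_eq hab hb (by nlinarith)
  have hv : x * a ≤ v := by
    have : b * (x * a) < b * (v + 1) := by nlinarith
    have := lt_of_mul_lt_mul_left this
    omega
  calc x + 1 = #((range (x + 1)).image fun j => u + j * b) := by
        rw [card_image_of_injective _ fun j j' hj => by
          simpa [Nat.mul_right_cancel_iff hb] using hj, card_range]
    _ ≤ #(pairReps a b M) := card_le_card fun w hw => by
        obtain ⟨j, hj, rfl⟩ := mem_image.1 hw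
        exact add_mul_mem_pairReps ha huv
          (le_trans (Nat.mul_le_mul_right a (Nat.lt_succ_iff.1 (mem_range.1 hj))) hv)

theorem repCountZ_natCast {k : ℕ} (a : Fin k → ℕ) (M : ℕ) : repCountZ a M = repCount a M := by
  simp [repCountZ]

theorem genFrob_pair {a b : ℕ} (hab : a.Coprime b) (ha : 0 < a) (hb : 0 < b) (x : ℕ) :
    genFrob ![a, b] x = (x + 1) * a * b - a - b := by
  have hF : (-1 : ℤ) ≤ (x + 1) * a * b - a - b := by
    have : (0 : ℤ) ≤ (a - 1) * (b - 1) + x * a * b := by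
      have : (1 : ℤ) ≤ a := by exact_mod_cast ha
      have : (1 : ℤ) ≤ b := by exact_mod_cast hb
      positivity
    linarith
  refine IsGreatest.csSup_eq ⟨?_, fun m hm => ?_⟩
  · show repCountZ _ _ ≤ x
    rcases lt_or_ge ((x + 1) * a * b - a - b : ℤ) 0 with hneg | hnonneg
    · rw [repCountZ, if_neg (not_le.2 hneg)]
      exact Nat.zero_le x
    · lift ((x + 1) * a * b - a - b : ℤ) to ℕ using hnonneg with M hM
      rw [repCountZ_natCast, repCount_pair hb,
        card_pairReps ha hab (u := b - 1) (R := x) (by omega)]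
      zify [hb]
      linarith
  · by_contra! hlt
    lift m to ℕ using by omega
    have := le_card_pairReps hab ha hb (x := x) (M := m) (by zify; linarith)
    change repCountZ _ _ ≤ x at hm
    rw [repCountZ_natCast, repCount_pair hb] at hm
    omega

theorem exists_genFrob_pair_add_eq {a b : ℕ} (hab : a.Coprime b) (ha : 2 ≤ a) (hb : 2 ≤ b)
    (x c : ℕ) : ∃ M : ℕ, genFrob ![a, b] x + c = M ∧ M + (a + b) = (x + 1) * a * b + c := by
  have : a + b ≤ (x + 1) * a * b + c := by
    have : a * b ≤ (x + 1) * a * b := by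
      rw [mul_assoc]; exact Nat.le_mul_of_pos_left _ x.succ_pos
    nlinarith
  obtain ⟨M, hM⟩ := Nat.exists_eq_add_of_le' this
  refine ⟨M, ?_, hM.symm⟩
  rw [genFrob_pair hab (by omega) (by omega)]
  have := congrArg (fun n : ℕ => (n : ℤ)) hM
  push_cast at this
  linarith

theorem repCount_triple {m a b : ℕ} (hm : 0 < m) (ha : 0 < a) (hb : 0 < b) (M : ℕ) :
    repCount ![m * a, a, b] M = ∑ u ∈ pairReps a b M, (u / m + 1) := by
  rw [repCount, show ∑ u ∈ pairReps a b M, (u / m + 1) =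
      #((pairReps a b M).sigma fun u => range (u / m + 1)) by simp only [card_sigma, card_range]]
  refine card_bij (fun x _ => ⟨x 1 + m * x 0, x 0⟩) ?_ ?_ ?_
  · intro x hx
    simp only [mem_filter, mem_univ, true_and, Fin.sum_univ_three, Matrix.cons_val_zero,
      Matrix.cons_val_one, Matrix.cons_val_two, Matrix.tail_cons, Matrix.head_cons] at hx
    simp only [mem_sigma, pairReps, mem_filter, mem_range, Nat.lt_succ_iff,
      Nat.le_div_iff_mul_le hm]
    have hU : a * (x 1 + m * x 0) + b * x 2 = M := by linear_combination hx
    refine ⟨⟨by nlinarith [Nat.le_mul_of_pos_left (x 1 + m * x 0 : ℕ) ha], by omega,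
      x 2, by omega⟩, by nlinarith⟩
  · intro x hx y hy hxy
    simp only [mem_filter, mem_univ, true_and, Fin.sum_univ_three, Matrix.cons_val_zero,
      Matrix.cons_val_one, Matrix.cons_val_two, Matrix.tail_cons, Matrix.head_cons] at hx hy
    simp only [Sigma.mk.injEq, heq_eq_eq] at hxy
    obtain ⟨h1, h0⟩ := hxy
    have h1 : (x 1 : ℕ) = y 1 := by rw [h0] at h1; omega
    have h2 : (x 2 : ℕ) = y 2 :=
      Nat.eq_of_mul_eq_mul_left hb (by rw [h0, h1] at hx; omega)
    funext j
    fin_cases j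
    exacts [Fin.ext h0, Fin.ext h1, Fin.ext h2]
  · rintro ⟨U, z⟩ hUz
    simp only [mem_sigma, pairReps, mem_filter, mem_range, Nat.lt_succ_iff,
      Nat.le_div_iff_mul_le hm] at hUz
    obtain ⟨⟨hU, hUM, v, hv⟩, hz⟩ := hUz
    have hvM : v < M + 1 := by have := Nat.le_mul_of_pos_left v hb; omega
    have hzM : z < M + 1 := by have := Nat.le_mul_of_pos_right z hm; omega
    refine ⟨![⟨z, hzM⟩, ⟨U - m * z, by omega⟩, ⟨v, hvM⟩], ?_, ?_⟩
    · simp only [mem_filter, mem_univ, true_and, Fin.sum_univ_three, Matrix.cons_val_zero,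
        Matrix.cons_val_one, Matrix.cons_val_two, Matrix.tail_cons, Matrix.head_cons]
      have hmz : m * z ≤ U := by rw [mul_comm]; exact hz
      obtain ⟨w, rfl⟩ := Nat.exists_eq_add_of_le hmz
      have : a * (m * z + w) = m * a * z + a * w := by ring
      simp only [Nat.add_sub_cancel_left]
      omega
    · have hmz : m * z ≤ U := by rw [mul_comm]; exact hz
      simp only [Matrix.cons_val_zero, Matrix.cons_val_one, Sigma.mk.injEq,
        heq_eq_eq, and_true]
      omega

theorem repCount_triple_eq_sum {m a b u R M : ℕ} (hm : 0 < m) (ha : 0 < a) (hab : a.Coprime b)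
    (hu : u < b) (h : a * u + b * (R * a) = M + b) :
    repCount ![m * a, a, b] M = ∑ j ∈ range R, ((u + j * b) / m + 1) := by
  rw [repCount_triple hm ha (by omega), pairReps_eq_image ha hab hu h,
    sum_image fun j _ j' _ hj => by simpa [Nat.mul_right_cancel_iff (show 0 < b by omega)] using hj]

theorem sum_range_two_mul_add_ite {c d R : ℕ} (hdR : d ≤ R) :
    ∑ j ∈ range R, (2 * j + c + if d ≤ j then 1 else 0) + d = R * R + c * R := by
  have hgauss := sum_range_id_mul_two R
  have hcount : #((range R).filter (d ≤ ·)) = R - d := by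
    rw [range_eq_Ico, Ico_filter_le, Nat.card_Ico, max_eq_right (Nat.zero_le d)]
  rw [sum_add_distrib, sum_add_distrib, ← mul_sum, sum_const, card_range, smul_eq_mul, sum_boole,
    Nat.cast_id, hcount, mul_comm R c]
  rw [Nat.mul_sub_one] at hgauss
  have : R ≤ R * R := Nat.le_mul_self R
  omega

theorem sum_range_div_add_one {m u c d R : ℕ} (hm : 0 < m) (hdR : d ≤ R) (hlo : c * m ≤ u)
    (hd : u + 3 * d < (c + 1) * m + 3) (hd' : (c + 1) * m ≤ u + 3 * d)
    (hR : u + 3 * R < (c + 2) * m + 3) :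
    ∑ j ∈ range R, ((u + j * (2 * m + 3)) / m + 1) + d = R * R + (c + 1) * R := by
  rw [← sum_range_two_mul_add_ite hdR]
  congr 1
  refine sum_congr rfl fun j hj => ?_
  have hj := mem_range.1 hj
  have hsplit : u + j * (2 * m + 3) = u + 3 * j + 2 * j * m := by ring
  have hdiv : (u + 3 * j) / m = c + if d ≤ j then 1 else 0 := by
    simp only [add_mul, one_mul] at hd hd' hR
    split_ifs with hdj
    · exact Nat.div_eq_of_lt_le (by rw [add_mul]; omega) (by rw [add_mul, add_mul]; omega)
    · rw [add_zero]
      exact Nat.div_eq_of_lt_le (by omega) (by rw [add_mul]; omega)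
  rw [hsplit, Nat.add_mul_div_right _ _ hm, hdiv]
  ring

theorem coprime_two_mul_add_one_two_mul_add_three (m : ℕ) :
    (2 * m + 1).Coprime (2 * m + 3) := by
  rw [show 2 * m + 3 = 2 * m + 1 + 2 by ring, Nat.coprime_self_add_right]
  exact Nat.coprime_two_right.2 (odd_two_mul_add_one m)

theorem repCount_even_shift {m i d M : ℕ} (hi : 3 * i + 1 ≤ m) (hd : 3 * (i + d) ≤ m + 2)
    (hM : M + ((2 * m + 1) + (2 * m + 3)) =
      (i + 1) * (2 * m + 1) * (2 * m + 3) + 2 * d * (m * (2 * m + 1))) :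
    repCount ![m * (2 * m + 1), 2 * m + 1, 2 * m + 3] M = (i + d) * (i + d + 1) + i := by
  obtain ⟨u, hu⟩ : ∃ u, u + 3 * d = 2 * m + 2 := ⟨2 * m + 2 - 3 * d, by omega⟩
  have hsum := sum_range_div_add_one (m := m) (u := u) (c := 1) (d := d) (R := i + d) (by omega)
    (by omega) (by omega) (by omega) (by omega) (by omega)
  rw [repCount_triple_eq_sum (by omega) (by omega) (coprime_two_mul_add_one_two_mul_add_three m)
    (u := u) (R := i + d) (by omega) (by linear_combination (2 * m + 1) * hu - hM)]
  nlinarith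

theorem repCount_odd_shift {m j e M : ℕ} (hm : 3 * (j + e) + 1 ≤ m)
    (hM : M + ((2 * m + 1) + (2 * m + 3)) =
      (j + 1) * (2 * m + 1) * (2 * m + 3) + (2 * e + 1) * (m * (2 * m + 1))) :
    repCount ![m * (2 * m + 1), 2 * m + 1, 2 * m + 3] M =
      (j + e) * (j + e + 1) + (j + e + 1 + j) := by
  obtain ⟨u, hu⟩ : ∃ u, u + 3 * e + 1 = m := ⟨m - 3 * e - 1, by omega⟩
  have hsum := sum_range_div_add_one (m := m) (u := u) (c := 0) (d := e + 1) (R := j + e + 1)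
    (by omega) (by omega) (by omega) (by omega) (by omega) (by omega)
  rw [repCount_triple_eq_sum (by omega) (by omega) (coprime_two_mul_add_one_two_mul_add_three m)
    (u := u) (R := j + e + 1) (by omega) (by linear_combination (2 * m + 1) * hu - hM)]
  nlinarith

theorem t_two_mul (m : ℕ) : t (2 * m) = m * (2 * m + 1) := by
  rw [t, show 2 * m * (2 * m + 1) = 2 * (m * (2 * m + 1)) by ring,
    Nat.mul_div_cancel_left _ two_pos]

theorem three_mul_le_of_NEven_lt {m q s : ℕ} (hq : q * q ≤ s + 1)
    (h : ((2 * m : ℕ) : ℤ) > NEven s) : 3 * q ≤ m + 2 := by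
  have := Nat.le_sqrt.2 hq
  unfold NEven at h
  omega

/-- with `s = k(k+1) + i`, `0 ≤ i ≤ 2k+1`, for even `n > N_s^even`,
`d(g(n+1, n+3; x_s^even) + y_s^even·t_n ; t_n, n+1, n+3) = s`. -/
theorem stmt_8 (k i n : ℕ) (hi : i ≤ 2 * k + 1) (hn : Even n)
    (hbound : (n : ℤ) > NEven (k * (k + 1) + i)) :
    repCountZ ![t n, n + 1, n + 3]
        (genFrob ![n + 1, n + 3] (xEvenN k i) + ((yEvenN k i * t n : ℕ) : ℤ)) =
      k * (k + 1) + i := by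
  obtain ⟨m, rfl⟩ := hn
  rw [← two_mul] at hbound ⊢
  have hq (q : ℕ) (hq : q * q ≤ k * (k + 1) + i + 1) : 3 * q ≤ m + 2 :=
    three_mul_le_of_NEven_lt hq hbound
  have hm : 1 ≤ m := by have := hq 1 (by nlinarith); omega
  obtain ⟨M, hMeq, hM⟩ := exists_genFrob_pair_add_eq
    (coprime_two_mul_add_one_two_mul_add_three m) (by omega) (by omega) (xEvenN k i)
    (yEvenN k i * (m * (2 * m + 1)))
  rw [t_two_mul, hMeq, repCountZ_natCast]
  rcases le_or_gt i k with hik | hik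
  · obtain ⟨d, rfl⟩ := Nat.exists_eq_add_of_le hik
    simp only [xEvenN, yEvenN, if_pos hik, Nat.add_sub_cancel_left] at hM
    have := hq (i + 1) (by nlinarith)
    exact repCount_even_shift (by omega) (hq (i + d) (by nlinarith)) hM
  · obtain ⟨j, rfl⟩ : ∃ j, i = k + 1 + j := ⟨i - k - 1, by omega⟩
    obtain ⟨e, rfl⟩ : ∃ e, k = j + e := ⟨k - j, by omega⟩
    have hx : xEvenN (j + e) (j + e + 1 + j) = j := by simp only [xEvenN]; split_ifs <;> omega
    have hy : yEvenN (j + e) (j + e + 1 + j) = 2 * e + 1 := by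
      simp only [yEvenN]; split_ifs <;> omega
    rw [hx, hy] at hM
    have := hq (j + e + 1) (by nlinarith)
    exact repCount_odd_shift (by omega) hM
end
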